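/- arXiv:0812.1758 — 5 statements merged into one kernel-verified Lean document; each statement's English description precedes it below -/
import Mathlib

section
/- There exists a constant C > 0 depending only on Ω (one may take C = √2·sup_{x∈Ω}|x|) such that for all τ > 0, τ̃ > 0 and all q ≥ 0, |√(μ*(q,τ)) − √(μ*(q,τ̃))| ≤ C·q·|τ − τ̃|. -/
open MeasureTheory Real Set
open scoped RealInnerProductSpace

noncomputable section

/-- ℝ³ with its Euclidean structure. -/
abbrev E3 := EuclideanSpace ℝ (Fin 3)

/-- Reinterpret a plain vector `Fin 3 → ℝ` as an element of Euclidean space. -/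
def ofV (v : Fin 3 → ℝ) : E3 := WithLp.toLp 2 v

/-- Partial derivative `∂ᵢ f` of a scalar function on ℝ³. -/
def pd (f : E3 → ℝ) (i : Fin 3) (x : E3) : ℝ := fderiv ℝ f x (EuclideanSpace.single i 1)

/-- Divergence of a vector field: `div u = ∂₁u₁ + ∂₂u₂ + ∂₃u₃`. -/
def vdiv (u : E3 → E3) (x : E3) : ℝ := ∑ i, pd (fun y => u y i) i x

/-- Curl of a vector field:
`curl u = (∂₂u₃ − ∂₃u₂, ∂₃u₁ − ∂₁u₃, ∂₁u₂ − ∂₂u₁)`. -/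
def vcurl (u : E3 → E3) (x : E3) : E3 := ofV ![
  pd (fun y => u y 2) 1 x - pd (fun y => u y 1) 2 x,
  pd (fun y => u y 0) 2 x - pd (fun y => u y 2) 0 x,
  pd (fun y => u y 1) 0 x - pd (fun y => u y 0) 1 x]

/-- `|i∇ψ + Aψ|²(x) = Σⱼ |i ∂ⱼψ(x) + Aⱼ(x) ψ(x)|²`, the squared magnetic gradient. -/
def magSq (A : E3 → E3) (ψ : E3 → ℂ) (x : E3) : ℝ :=
  ∑ j, ‖Complex.I * fderiv ℝ ψ x (EuclideanSpace.single j 1) + (A x j : ℂ) * ψ x‖ ^ 2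

/-- `μ(A)`: the ground-state energy (lowest Neumann eigenvalue) of `(i∇+A)²` on `Ω`,
defined as the infimum of the Rayleigh quotient over admissible `ψ`. -/
def mu (Ω : Set E3) (A : E3 → E3) : ℝ :=
  sInf { r : ℝ | ∃ ψ : E3 → ℂ, ContDiffOn ℝ 1 ψ Ω ∧
    IntegrableOn (fun x => ‖ψ x‖ ^ 2) Ω ∧
    IntegrableOn (magSq A ψ) Ω ∧
    0 < (∫ x in Ω, ‖ψ x‖ ^ 2) ∧
    r = (∫ x in Ω, magSq A ψ x) / (∫ x in Ω, ‖ψ x‖ ^ 2) }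

/-- The rotation group SO(3) as a set of 3×3 real matrices. -/
def SO3 : Set (Matrix (Fin 3) (Fin 3) ℝ) := { Q | Q.transpose * Q = 1 ∧ Q.det = 1 }

/-- The helical field `n_τ(x) = (cos(τx₃), sin(τx₃), 0)`. -/
def nhel (τ : ℝ) (x : E3) : E3 := ofV ![Real.cos (τ * x 2), Real.sin (τ * x 2), 0]

/-- `n_τ^Q(x) = Q n_τ(Qᵀ x)`. -/
def nQ (τ : ℝ) (Q : Matrix (Fin 3) (Fin 3) ℝ) (x : E3) : E3 :=
  ofV (Q.mulVec (nhel τ (ofV (Q.transpose.mulVec (fun i => x i)))))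

/-- `μ*(q,τ) = inf_{Q ∈ SO(3)} μ(q n_τ^Q)`. -/
def muStar (Ω : Set E3) (q τ : ℝ) : ℝ := ⨅ Q : SO3, mu Ω (fun x => q • nQ τ Q.1 x)

/-- `|∇u|² = Σ_{i,j} (∂ᵢuⱼ)²`. -/
def gradSq (u : E3 → E3) (x : E3) : ℝ := ∑ i, ∑ j, (pd (fun y => u y j) i x) ^ 2

/-- Second partial derivative `∂ᵢ∂ᵢ f`. -/
def pd2 (f : E3 → ℝ) (i : Fin 3) : E3 → ℝ := pd (pd f i) i

/-- Componentwise Laplacian of a vector field. -/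
def vlap (u : E3 → E3) (x : E3) : E3 := ofV (fun j => ∑ i, pd2 (fun y => u y j) i x)

/-- The Landau–de Gennes functional
`F(ψ,n) = ∫|i∇ψ+qnψ|² − κ²∫|ψ|² + (κ²/2)∫|ψ|⁴ + K₁∫(div n)² + K₂∫|curl n + τn|²`. -/
def LdG (Ω : Set E3) (q τ κ K₁ K₂ : ℝ) (ψ : E3 → ℂ) (n : E3 → E3) : ℝ :=
  (∫ x in Ω, magSq (fun y => q • n y) ψ x) - κ ^ 2 * (∫ x in Ω, ‖ψ x‖ ^ 2)
    + κ ^ 2 / 2 * (∫ x in Ω, ‖ψ x‖ ^ 4)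
    + K₁ * (∫ x in Ω, (vdiv n x) ^ 2)
    + K₂ * (∫ x in Ω, ‖vcurl n x + τ • n x‖ ^ 2)

/-- Smooth compactly supported test vector fields in `Ω`. -/
def testFields (Ω : Set E3) : Set (E3 → E3) :=
  { u | ContDiff ℝ (⊤ : ℕ∞) u ∧ HasCompactSupport u ∧ tsupport u ⊆ Ω }

/-- The quadratic form `Q_τ(u) = ‖div u‖²_{L²} + ‖curl u + τu‖²_{L²}`. -/
def Qform (Ω : Set E3) (τ : ℝ) (u : E3 → E3) : ℝ :=
  (∫ x in Ω, (vdiv u x) ^ 2) + ∫ x in Ω, ‖vcurl u x + τ • u x‖ ^ 2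

/-- `μ_τ`: the bottom of the quadratic form `Q_τ` over test fields (ground state of
`T_τ = −Δ + 2τ curl + τ²` with Dirichlet conditions). -/
def muT (Ω : Set E3) (τ : ℝ) : ℝ :=
  sInf { r : ℝ | ∃ u ∈ testFields Ω, u ≠ 0 ∧ r = Qform Ω τ u / ∫ x in Ω, ‖u x‖ ^ 2 }

/-- `λ₁`: the lowest Dirichlet eigenvalue of `−Δ` on `Ω`, via the Rayleigh quotient. -/
def lam1 (Ω : Set E3) : ℝ :=
  sInf { r : ℝ | ∃ u ∈ testFields Ω, u ≠ 0 ∧ r = (∫ x in Ω, gradSq u x) / ∫ x in Ω, ‖u x‖ ^ 2 }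

open scoped Matrix

/-- The defining set of the Rayleigh quotient values for `mu`. -/
def RS (Ω : Set E3) (A : E3 → E3) : Set ℝ :=
  { r : ℝ | ∃ ψ : E3 → ℂ, ContDiffOn ℝ 1 ψ Ω ∧
    IntegrableOn (fun x => ‖ψ x‖ ^ 2) Ω ∧
    IntegrableOn (magSq A ψ) Ω ∧
    0 < (∫ x in Ω, ‖ψ x‖ ^ 2) ∧
    r = (∫ x in Ω, magSq A ψ x) / (∫ x in Ω, ‖ψ x‖ ^ 2) }

lemma mu_eq (Ω : Set E3) (A : E3 → E3) : mu Ω A = sInf (RS Ω A) := rfl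

lemma magSq_nonneg (A : E3 → E3) (ψ : E3 → ℂ) (x : E3) : 0 ≤ magSq A ψ x :=
  Finset.sum_nonneg fun _ _ => sq_nonneg _

lemma RS_bddBelow (Ω : Set E3) (A : E3 → E3) : BddBelow (RS Ω A) := by
  refine ⟨0, ?_⟩
  rintro r ⟨ψ, _, _, _, hD, rfl⟩
  exact div_nonneg (integral_nonneg fun x => magSq_nonneg A ψ x) hD.le

lemma mu_nonneg (Ω : Set E3) (A : E3 → E3) : 0 ≤ mu Ω A := by
  rw [mu_eq]
  exact Real.sInf_nonneg fun r hr => by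
    obtain ⟨ψ, _, _, _, hD, rfl⟩ := hr
    exact div_nonneg (integral_nonneg fun x => magSq_nonneg A ψ x) hD.le

private lemma young_div {t x y : ℝ} (ht0 : 0 < t) (ht1 : t < 1) :
    (x + y)^2 ≤ x^2/t + y^2/(1-t) := by
  have h1 : 0 < 1 - t := by linarith
  have h2 : x^2/t + y^2/(1-t) = ((1-t)*x^2 + t*y^2)/(t*(1-t)) := by field_simp
  rw [h2, le_div_iff₀ (by positivity)]
  nlinarith [sq_nonneg ((1-t)*x - t*y)]

private lemma norm_add_sq_le' {t : ℝ} (ht0 : 0 < t) (ht1 : t < 1) (a b : ℂ) :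
    ‖a + b‖^2 ≤ ‖a‖^2/t + ‖b‖^2/(1-t) := by
  have h := norm_add_le a b
  have h2 : ‖a+b‖^2 ≤ (‖a‖+‖b‖)^2 := by nlinarith [norm_nonneg (a+b)]
  exact h2.trans (young_div ht0 ht1)

lemma magSq_pointwise {A A' : E3 → E3} {ψ : E3 → ℂ} {x : E3} {ε t : ℝ}
    (ht0 : 0 < t) (ht1 : t < 1) (hε : ∑ i, (A' x i - A x i)^2 ≤ ε^2) :
    magSq A' ψ x ≤ magSq A ψ x / t + ε^2 * ‖ψ x‖^2 / (1-t) := by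
  have h1t : 0 < 1 - t := by linarith
  have step : ∀ j : Fin 3,
      ‖Complex.I * fderiv ℝ ψ x (EuclideanSpace.single j 1) + (A' x j : ℂ) * ψ x‖^2
      ≤ ‖Complex.I * fderiv ℝ ψ x (EuclideanSpace.single j 1) + (A x j : ℂ) * ψ x‖^2 / t
        + (A' x j - A x j)^2 * ‖ψ x‖^2 / (1-t) := by
    intro j
    have heq : Complex.I * fderiv ℝ ψ x (EuclideanSpace.single j 1) + (A' x j : ℂ) * ψ x
        = (Complex.I * fderiv ℝ ψ x (EuclideanSpace.single j 1) + (A x j : ℂ) * ψ x)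
          + ((A' x j - A x j : ℝ) : ℂ) * ψ x := by push_cast; ring
    rw [heq]
    refine (norm_add_sq_le' ht0 ht1 _ _).trans ?_
    have hw : ‖((A' x j - A x j : ℝ) : ℂ) * ψ x‖^2 = (A' x j - A x j)^2 * ‖ψ x‖^2 := by
      rw [norm_mul, Complex.norm_real, mul_pow, Real.norm_eq_abs, sq_abs]
    rw [hw]
  unfold magSq
  refine (Finset.sum_le_sum fun j _ => step j).trans ?_
  rw [Finset.sum_add_distrib, ← Finset.sum_div, ← Finset.sum_div, ← Finset.sum_mul]
  gcongr

lemma magSq_contOn {Ω : Set E3} (hopen : IsOpen Ω) {A : E3 → E3}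
    (hA : ∀ j, Continuous fun x => A x j)
    {ψ : E3 → ℂ} (hψ : ContDiffOn ℝ 1 ψ Ω) : ContinuousOn (magSq A ψ) Ω := by
  have hd : ContinuousOn (fderiv ℝ ψ) Ω := hψ.continuousOn_fderiv_of_isOpen hopen le_rfl
  have hψc : ContinuousOn ψ Ω := hψ.continuousOn
  unfold magSq
  apply continuousOn_finset_sum
  intro j _
  apply ContinuousOn.pow
  apply ContinuousOn.norm
  apply ContinuousOn.add
  · exact continuousOn_const.mul (hd.clm_apply continuousOn_const)
  · exact ((Complex.continuous_ofReal.comp (hA j)).continuousOn).mul hψc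

lemma mu_comp {Ω : Set E3} (hopen : IsOpen Ω)
    {A A' : E3 → E3} (hA' : ∀ j, Continuous fun x => A' x j)
    {ε : ℝ} (hAA' : ∀ x ∈ Ω, ∑ i, (A' x i - A x i)^2 ≤ ε^2)
    (hne' : (RS Ω A).Nonempty)
    {t : ℝ} (ht0 : 0 < t) (ht1 : t < 1) :
    mu Ω A' ≤ mu Ω A / t + ε^2/(1-t) := by
  have hmeas : MeasurableSet Ω := hopen.measurableSet
  have h1t : 0 < 1 - t := by linarith
  have step : ∀ r ∈ RS Ω A, mu Ω A' ≤ r / t + ε^2/(1-t) := by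
    rintro r ⟨ψ, hψ, hI2, hI1, hD, rfl⟩
    have hsm : AEStronglyMeasurable (magSq A' ψ) (volume.restrict Ω) :=
      (magSq_contOn hopen hA' hψ).aestronglyMeasurable hmeas
    have hbound : Integrable (fun x => magSq A ψ x / t + ε^2*‖ψ x‖^2/(1-t))
        (volume.restrict Ω) :=
      (hI1.div_const t).add ((hI2.const_mul (ε^2)).div_const (1-t))
    have hptws : ∀ᵐ x ∂(volume.restrict Ω),
        magSq A' ψ x ≤ magSq A ψ x / t + ε^2*‖ψ x‖^2/(1-t) := by
      filter_upwards [ae_restrict_mem hmeas] with x hx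
      have := magSq_pointwise (A := A) (A' := A') (ψ := ψ) ht0 ht1 (hAA' x hx)
      linarith [this]
    have hI' : IntegrableOn (magSq A' ψ) Ω := by
      refine hbound.mono' hsm ?_
      filter_upwards [hptws] with x hx
      rw [Real.norm_eq_abs, abs_of_nonneg (magSq_nonneg A' ψ x)]
      exact hx
    have hint_le : (∫ x in Ω, magSq A' ψ x)
        ≤ (∫ x in Ω, magSq A ψ x)/t + ε^2*(∫ x in Ω, ‖ψ x‖^2)/(1-t) := by
      calc (∫ x in Ω, magSq A' ψ x)
          ≤ ∫ x in Ω, (magSq A ψ x / t + ε^2*‖ψ x‖^2/(1-t)) :=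
            integral_mono_ae hI' hbound hptws
        _ = (∫ x in Ω, magSq A ψ x)/t + ε^2*(∫ x in Ω, ‖ψ x‖^2)/(1-t) := by
            rw [integral_add (hI1.div_const t) ((hI2.const_mul _).div_const _),
              integral_div, integral_div, integral_const_mul]
    have hmem : (∫ x in Ω, magSq A' ψ x)/(∫ x in Ω, ‖ψ x‖^2) ∈ RS Ω A' :=
      ⟨ψ, hψ, hI2, hI', hD, rfl⟩
    have hDne : (∫ x in Ω, ‖ψ x‖^2) ≠ 0 := ne_of_gt hD
    calc mu Ω A' ≤ (∫ x in Ω, magSq A' ψ x)/(∫ x in Ω, ‖ψ x‖^2) := by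
          rw [mu_eq]; exact csInf_le (RS_bddBelow Ω A') hmem
      _ ≤ ((∫ x in Ω, magSq A ψ x)/t + ε^2*(∫ x in Ω, ‖ψ x‖^2)/(1-t))/(∫ x in Ω, ‖ψ x‖^2) := by
          gcongr
      _ = (∫ x in Ω, magSq A ψ x)/(∫ x in Ω, ‖ψ x‖^2)/t + ε^2/(1-t) := by
          rw [add_div, div_div, mul_comm t, ← div_div,
            div_right_comm (ε^2*_), mul_div_assoc (ε^2), div_self hDne, mul_one]
  have h2 : (mu Ω A' - ε^2/(1-t)) * t ≤ mu Ω A := by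
    rw [mu_eq]
    apply le_csInf hne'
    intro r hr
    have h3 := step r hr
    have h4 : mu Ω A' - ε^2/(1-t) ≤ r / t := by linarith
    exact (le_div_iff₀ ht0).mp h4
  have h5 : mu Ω A' - ε^2/(1-t) ≤ mu Ω A / t := (le_div_iff₀ ht0).mpr h2
  linarith

private lemma opt_bound {M N ε s : ℝ} (hM : 0 ≤ M) (hε : 0 ≤ ε) (hs : 0 < s)
    (key : ∀ t : ℝ, 0 < t → t < 1 → N ≤ M/t + ε^2/(1-t)) :
    Real.sqrt N ≤ Real.sqrt M + ε + s := by
  obtain ⟨a, ha⟩ : ∃ a : ℝ, a = Real.sqrt M + s/2 := ⟨_, rfl⟩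
  obtain ⟨b, hb⟩ : ∃ b : ℝ, b = ε + s/2 := ⟨_, rfl⟩
  obtain ⟨u, hu⟩ : ∃ u : ℝ, u = a + b := ⟨_, rfl⟩
  have hsM := Real.sqrt_nonneg M
  have ha0 : 0 < a := by rw [ha]; linarith
  have hb0 : 0 < b := by rw [hb]; linarith
  have hu0 : 0 < u := by rw [hu]; linarith
  have ht0 : 0 < a/u := by positivity
  have ht1 : a/u < 1 := (div_lt_one hu0).mpr (by linarith)
  have hkey := key (a/u) ht0 ht1
  have hMa : M ≤ a^2 := by
    rw [ha]
    nlinarith [Real.sq_sqrt hM, mul_nonneg hsM hs.le]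
  have h1 : M/(a/u) ≤ a*u := by
    rw [div_div_eq_mul_div, div_le_iff₀ ha0]
    nlinarith [hu0.le]
  have h1mt : 1 - a/u = b/u := by
    rw [hu]; field_simp; ring
  have h2 : ε^2/(1-(a/u)) ≤ b*u := by
    rw [h1mt, div_div_eq_mul_div, div_le_iff₀ hb0]
    have hεb : ε ≤ b := by rw [hb]; linarith
    have h3 : ε*ε ≤ b*b := mul_le_mul hεb hεb hε hb0.le
    nlinarith [mul_le_mul_of_nonneg_right h3 hu0.le]
  have habu : a*u + b*u = u^2 := by rw [hu]; ring
  have hfin : N ≤ u^2 := by linarith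
  calc Real.sqrt N ≤ Real.sqrt (u^2) := Real.sqrt_le_sqrt hfin
    _ = u := Real.sqrt_sq hu0.le
    _ = Real.sqrt M + ε + s := by rw [hu, ha, hb]; ring

lemma sqrt_mu_le {Ω : Set E3} {A A' : E3 → E3} {ε : ℝ} (hε : 0 ≤ ε)
    (hcomp : ∀ t : ℝ, 0 < t → t < 1 → mu Ω A' ≤ mu Ω A / t + ε^2/(1-t))
    (hA0 : 0 ≤ mu Ω A) :
    Real.sqrt (mu Ω A') ≤ Real.sqrt (mu Ω A) + ε := by
  refine le_of_forall_pos_le_add fun s hs => ?_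
  have := opt_bound hA0 hε hs hcomp
  linarith

private lemma sqrt_add_le' {x y : ℝ} (hx : 0 ≤ x) (hy : 0 ≤ y) :
    Real.sqrt (x+y) ≤ Real.sqrt x + Real.sqrt y := by
  have h : x + y ≤ (Real.sqrt x + Real.sqrt y)^2 := by
    nlinarith [Real.sq_sqrt hx, Real.sq_sqrt hy,
      mul_nonneg (Real.sqrt_nonneg x) (Real.sqrt_nonneg y)]
  calc Real.sqrt (x+y) ≤ Real.sqrt ((Real.sqrt x + Real.sqrt y)^2) := Real.sqrt_le_sqrt h
  _ = _ := Real.sqrt_sq (by positivity)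

private lemma cos_lip (a b : ℝ) : |Real.cos a - Real.cos b| ≤ |a - b| := by
  rw [Real.cos_sub_cos, abs_mul, abs_mul]
  simp only [abs_neg, abs_two]
  have h2 : |Real.sin ((a-b)/2)| ≤ |a-b|/2 := by
    simpa [abs_div, abs_two] using Real.abs_sin_le_abs (x := (a-b)/2)
  nlinarith [abs_nonneg (Real.sin ((a+b)/2)), Real.abs_sin_le_one ((a+b)/2),
    abs_nonneg (Real.sin ((a-b)/2))]

private lemma sin_lip (a b : ℝ) : |Real.sin a - Real.sin b| ≤ |a - b| := by
  rw [Real.sin_sub_sin, abs_mul, abs_mul]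
  simp only [abs_two]
  have h2 : |Real.sin ((a-b)/2)| ≤ |a-b|/2 := by
    simpa [abs_div, abs_two] using Real.abs_sin_le_abs (x := (a-b)/2)
  nlinarith [abs_nonneg (Real.cos ((a+b)/2)), Real.abs_cos_le_one ((a+b)/2),
    abs_nonneg (Real.sin ((a-b)/2))]

private lemma sum_sq_mulVec {Q : Matrix (Fin 3) (Fin 3) ℝ} (hQ : Qᵀ * Q = 1) (d : Fin 3 → ℝ) :
    ∑ i, (Q.mulVec d i)^2 = ∑ i, (d i)^2 := by
  have h1 : ∀ v : Fin 3 → ℝ, ∑ i, (v i)^2 = dotProduct v v := by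
    intro v; simp [dotProduct, sq]
  rw [h1, h1, Matrix.dotProduct_mulVec, ← Matrix.mulVec_transpose,
    Matrix.mulVec_mulVec, hQ, Matrix.one_mulVec]

lemma nhel_comp_cont (τ : ℝ) (Q : Matrix (Fin 3) (Fin 3) ℝ) (k : Fin 3) :
    Continuous fun x : E3 => nhel τ (ofV (Qᵀ.mulVec fun i => x i)) k := by
  have hy : Continuous fun x : E3 => (Qᵀ.mulVec fun i => x i) 2 := by
    show Continuous fun x : E3 => ∑ j, Qᵀ 2 j * x j
    exact continuous_finset_sum _ fun j _ =>
      continuous_const.mul (EuclideanSpace.proj j).continuous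
  have : ∀ x : E3, ofV (Qᵀ.mulVec fun i => x i) 2 = (Qᵀ.mulVec fun i => x i) 2 :=
    fun x => rfl
  fin_cases k
  · simpa [nhel, ofV, Function.comp_def] using (Real.continuous_cos.comp (continuous_const.mul hy) :
      Continuous fun x : E3 => Real.cos (τ * (Qᵀ.mulVec fun i => x i) 2))
  · simpa [nhel, ofV, Function.comp_def] using (Real.continuous_sin.comp (continuous_const.mul hy) :
      Continuous fun x : E3 => Real.sin (τ * (Qᵀ.mulVec fun i => x i) 2))
  · simpa [nhel, ofV] using continuous_const (y := (0:ℝ))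

lemma field_cont (q τ : ℝ) (Q : Matrix (Fin 3) (Fin 3) ℝ) (j : Fin 3) :
    Continuous fun x : E3 => (q • nQ τ Q x) j := by
  have : ∀ x : E3, (q • nQ τ Q x) j
      = q * ∑ k, Q j k * nhel τ (ofV (Qᵀ.mulVec fun i => x i)) k := by
    intro x
    simp [nQ, ofV, PiLp.smul_apply, smul_eq_mul, Matrix.mulVec, dotProduct]
  simp only [this]
  exact continuous_const.mul (continuous_finset_sum _ fun k _ =>
    continuous_const.mul (nhel_comp_cont τ Q k))

lemma field_diff {Q : Matrix (Fin 3) (Fin 3) ℝ} (hQ : Q ∈ SO3) {q τ τ' R : ℝ}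
    (hq : 0 ≤ q) (hR : 0 ≤ R) {x : E3} (hx : ‖x‖ ≤ R) :
    ∑ i, ((q • nQ τ' Q x) i - (q • nQ τ Q x) i)^2 ≤ (2*R*q*|τ - τ'|)^2 := by
  obtain ⟨y, hy⟩ : ∃ y : Fin 3 → ℝ, y = Qᵀ.mulVec (fun i => x i) := ⟨_, rfl⟩
  obtain ⟨d, hd⟩ : ∃ d : Fin 3 → ℝ,
      d = fun k => nhel τ' (ofV y) k - nhel τ (ofV y) k := ⟨_, rfl⟩
  have h1 : ∀ i, (q • nQ τ' Q x) i - (q • nQ τ Q x) i = q * Q.mulVec d i := by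
    intro i
    have hsub : Q.mulVec d = Q.mulVec (nhel τ' (ofV y)) - Q.mulVec (nhel τ (ofV y)) := by
      rw [← Matrix.mulVec_sub, hd]
      rfl
    simp only [nQ, ofV, PiLp.smul_apply, smul_eq_mul, ← hy, hsub, Pi.sub_apply]
    ring
  have hrw : ∑ i, ((q • nQ τ' Q x) i - (q • nQ τ Q x) i)^2 = q^2 * ∑ i, (d i)^2 := by
    calc ∑ i, ((q • nQ τ' Q x) i - (q • nQ τ Q x) i)^2
        = ∑ i, q^2 * (Q.mulVec d i)^2 :=
          Finset.sum_congr rfl fun i _ => by rw [h1 i, mul_pow]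
      _ = q^2 * ∑ i, (Q.mulVec d i)^2 := (Finset.mul_sum _ _ _).symm
      _ = q^2 * ∑ i, (d i)^2 := by rw [sum_sq_mulVec hQ.1 d]
  rw [hrw]
  -- bound on the coordinate y 2
  have hz : (y 2)^2 ≤ R^2 := by
    have h2 : (y 2)^2 ≤ ∑ i, (y i)^2 :=
      Finset.single_le_sum (f := fun i => (y i)^2) (fun i _ => sq_nonneg _)
        (Finset.mem_univ 2)
    have h3 : ∑ i, (y i)^2 = ∑ i, (x i)^2 := by
      rw [hy]
      apply sum_sq_mulVec
      rw [Matrix.transpose_transpose]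
      exact mul_eq_one_comm.mp hQ.1
    have h4 : ∑ i, (x i)^2 = ‖x‖^2 := by
      rw [EuclideanSpace.norm_eq, Real.sq_sqrt (Finset.sum_nonneg fun i _ => sq_nonneg _)]
      simp [sq_abs]
    have h5 : ‖x‖^2 ≤ R^2 := pow_le_pow_left₀ (norm_nonneg x) hx 2
    linarith
  -- components of d
  have hd0 : (d 0)^2 ≤ (τ - τ')^2 * (y 2)^2 := by
    have : |d 0| ≤ |τ' - τ| * |y 2| := by
      rw [hd]
      show |Real.cos (τ' * ofV y 2) - Real.cos (τ * ofV y 2)| ≤ _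
      calc |Real.cos (τ' * ofV y 2) - Real.cos (τ * ofV y 2)|
          ≤ |τ' * ofV y 2 - τ * ofV y 2| := cos_lip _ _
        _ = |τ' - τ| * |y 2| := by rw [← sub_mul, abs_mul]; rfl
    calc (d 0)^2 = |d 0|^2 := (sq_abs _).symm
      _ ≤ (|τ' - τ| * |y 2|)^2 := pow_le_pow_left₀ (abs_nonneg _) this 2
      _ = (τ - τ')^2 * (y 2)^2 := by rw [mul_pow, sq_abs, sq_abs]; ring
  have hd1 : (d 1)^2 ≤ (τ - τ')^2 * (y 2)^2 := by
    have : |d 1| ≤ |τ' - τ| * |y 2| := by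
      rw [hd]
      show |Real.sin (τ' * ofV y 2) - Real.sin (τ * ofV y 2)| ≤ _
      calc |Real.sin (τ' * ofV y 2) - Real.sin (τ * ofV y 2)|
          ≤ |τ' * ofV y 2 - τ * ofV y 2| := sin_lip _ _
        _ = |τ' - τ| * |y 2| := by rw [← sub_mul, abs_mul]; rfl
    calc (d 1)^2 = |d 1|^2 := (sq_abs _).symm
      _ ≤ (|τ' - τ| * |y 2|)^2 := pow_le_pow_left₀ (abs_nonneg _) this 2
      _ = (τ - τ')^2 * (y 2)^2 := by rw [mul_pow, sq_abs, sq_abs]; ring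
  have hd2 : d 2 = 0 := by
    rw [hd]
    show nhel τ' (ofV y) 2 - nhel τ (ofV y) 2 = 0
    simp [nhel, ofV]
  have hsum : ∑ i, (d i)^2 ≤ 2 * ((τ - τ')^2 * (y 2)^2) := by
    rw [Fin.sum_univ_three, hd2]
    norm_num
    linarith
  have htt : (τ - τ')^2 * (y 2)^2 ≤ (τ - τ')^2 * R^2 :=
    mul_le_mul_of_nonneg_left hz (sq_nonneg _)
  calc q^2 * ∑ i, (d i)^2 ≤ q^2 * (2 * ((τ - τ')^2 * R^2)) := by
        apply mul_le_mul_of_nonneg_left _ (sq_nonneg q)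
        linarith
    _ ≤ (2*R*q*|τ - τ'|)^2 := by
        have habs : (2*R*q*|τ - τ'|)^2 = 4*(R^2*q^2*(τ-τ')^2) := by
          rw [mul_pow, mul_pow, mul_pow, sq_abs]; ring
        rw [habs]
        nlinarith [sq_nonneg (R*q*(τ-τ'))]

lemma nQ_unit {Q : Matrix (Fin 3) (Fin 3) ℝ} (hQ : Q ∈ SO3) (τ : ℝ) (x : E3) :
    ∑ j, (nQ τ Q x j)^2 = 1 := by
  have h1 : ∑ j, (nQ τ Q x j)^2
      = ∑ j, (nhel τ (ofV (Qᵀ.mulVec fun i => x i)) j)^2 :=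
    sum_sq_mulVec hQ.1 _
  rw [h1]
  rw [Fin.sum_univ_three]
  show Real.cos _ ^2 + Real.sin _ ^2 + (0:ℝ)^2 = 1
  rw [Real.cos_sq_add_sin_sq]
  norm_num

lemma RS_nonempty {Ω : Set E3} (hne : Ω.Nonempty) (hopen : IsOpen Ω)
    (hbdd : Bornology.IsBounded Ω) (q τ : ℝ) {Q : Matrix (Fin 3) (Fin 3) ℝ}
    (hQ : Q ∈ SO3) : (RS Ω (fun x => q • nQ τ Q x)).Nonempty := by
  have hvol_pos : 0 < volume Ω := hopen.measure_pos volume hne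
  have hvol_fin : volume Ω < ⊤ := hbdd.measure_lt_top
  have hmag : magSq (fun x => q • nQ τ Q x) (fun _ => 1) = fun _ => q^2 := by
    funext x
    unfold magSq
    have hfd : fderiv ℝ (fun _ : E3 => (1:ℂ)) x = 0 := fderiv_const_apply 1
    simp only [hfd, ContinuousLinearMap.zero_apply, mul_zero, zero_add, mul_one]
    have : ∀ j : Fin 3, ‖((((q • nQ τ Q x) j : ℝ)) : ℂ)‖^2 = q^2 * (nQ τ Q x j)^2 := by
      intro j
      rw [Complex.norm_real, Real.norm_eq_abs, sq_abs]
      show ((q • nQ τ Q x) j)^2 = _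
      rw [PiLp.smul_apply, smul_eq_mul, mul_pow]
    rw [Finset.sum_congr rfl fun j _ => this j, ← Finset.mul_sum, nQ_unit hQ, mul_one]
  have hone : (fun x : E3 => ‖(1:ℂ)‖^2) = fun _ : E3 => (1:ℝ) := by
    funext x; simp
  refine ⟨_, (fun _ => 1), contDiffOn_const, ?_, ?_, ?_, rfl⟩
  · rw [show (fun x : E3 => ‖(1:ℂ)‖^2) = fun _ : E3 => (1:ℝ) from hone]
    exact integrableOn_const hvol_fin.ne
  · rw [hmag]
    exact integrableOn_const hvol_fin.ne
  · rw [show (fun x : E3 => ‖(1:ℂ)‖^2) = fun _ : E3 => (1:ℝ) from hone]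
    rw [setIntegral_const, smul_eq_mul, mul_one]
    exact ENNReal.toReal_pos (ne_of_gt hvol_pos) (ne_of_lt hvol_fin)

/-- There exists `C > 0` depending only on `Ω` such that for all `τ, τ̃ > 0`
and `q ≥ 0`, `|√(μ*(q,τ)) − √(μ*(q,τ̃))| ≤ C q |τ − τ̃|`. -/
theorem lipschitz_muStar (Ω : Set E3) (hne : Ω.Nonempty) (hopen : IsOpen Ω)
    (hbdd : Bornology.IsBounded Ω) :
    ∃ C > 0, ∀ τ τ' q : ℝ, 0 < τ → 0 < τ' → 0 ≤ q →
      |Real.sqrt (muStar Ω q τ) - Real.sqrt (muStar Ω q τ')| ≤ C * q * |τ - τ'| := by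
  obtain ⟨R0, hR0⟩ := hbdd.subset_closedBall 0
  obtain ⟨R, hRdef⟩ : ∃ R : ℝ, R = max R0 1 := ⟨_, rfl⟩
  have hR1 : (1:ℝ) ≤ R := hRdef ▸ le_max_right R0 1
  have hR0' : (0:ℝ) ≤ R := by linarith
  have hΩR : ∀ x ∈ Ω, ‖x‖ ≤ R := by
    intro x hx
    have := hR0 hx
    rw [Metric.mem_closedBall, dist_zero_right] at this
    exact this.trans (hRdef ▸ le_max_left R0 1)
  have hSO3ne : Nonempty ↥SO3 := ⟨⟨1, by constructor <;> simp [SO3]⟩⟩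
  refine ⟨2*R, by linarith, ?_⟩
  intro τ τ' q _ _ hq
  -- one-sided estimate
  have key : ∀ σ σ' : ℝ,
      Real.sqrt (muStar Ω q σ') ≤ Real.sqrt (muStar Ω q σ) + 2*R*q*|σ - σ'| := by
    intro σ σ'
    have hbr : ∀ ρ : ℝ, BddBelow (Set.range fun Q : SO3 => mu Ω (fun x => q • nQ ρ Q.1 x)) := by
      intro ρ
      refine ⟨0, ?_⟩
      rintro _ ⟨Q, rfl⟩
      exact mu_nonneg _ _
    have hμ0 : 0 ≤ muStar Ω q σ := le_ciInf fun Q => mu_nonneg _ _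
    have hε0 : 0 ≤ 2*R*q*|σ - σ'| := by positivity
    refine le_of_forall_pos_le_add fun s hs => ?_
    have hlt : (⨅ Q : SO3, mu Ω (fun x => q • nQ σ Q.1 x)) < muStar Ω q σ + s^2 :=
      lt_add_of_pos_right _ (by positivity)
    obtain ⟨Q, hQlt⟩ := exists_lt_of_ciInf_lt hlt
    have hcomp : ∀ t : ℝ, 0 < t → t < 1 →
        mu Ω (fun x => q • nQ σ' Q.1 x)
          ≤ mu Ω (fun x => q • nQ σ Q.1 x) / t + (2*R*q*|σ - σ'|)^2/(1-t) := by
      intro t ht0 ht1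
      exact mu_comp hopen (field_cont q σ' Q.1)
        (fun x hx => field_diff Q.2 hq hR0' (hΩR x hx))
        (RS_nonempty hne hopen hbdd q σ Q.2) ht0 ht1
    have h1 := sqrt_mu_le hε0 hcomp (mu_nonneg _ _)
    have h2 : Real.sqrt (muStar Ω q σ') ≤ Real.sqrt (mu Ω (fun x => q • nQ σ' Q.1 x)) :=
      Real.sqrt_le_sqrt (ciInf_le (hbr σ') Q)
    have h3 : Real.sqrt (mu Ω (fun x => q • nQ σ Q.1 x))
        ≤ Real.sqrt (muStar Ω q σ + s^2) :=
      Real.sqrt_le_sqrt hQlt.le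
    have h4 : Real.sqrt (muStar Ω q σ + s^2) ≤ Real.sqrt (muStar Ω q σ) + s := by
      have := sqrt_add_le' hμ0 (sq_nonneg s)
      rwa [Real.sqrt_sq hs.le] at this
    linarith
  rw [abs_sub_le_iff]
  constructor
  · have := key τ' τ
    rw [abs_sub_comm] at this
    linarith
  · have := key τ τ'
    linarith
end
end

section
/- Let Ω be a nonempty connected open bounded subset of ℝ³, let q > 0, τ > 0, K₁ > 0, K₂ > 0, let ψ : Ω → ℂ be continuously differentiable and n : Ω → ℝ³ be continuously differentiable with |n(x)| = 1 for all x, and assume ∫_Ω |i∇ψ + q n ψ|² dx, ∫_Ω (div n)² dx and ∫_Ω |curl n + τn|² dx are finite. Then F₀(ψ,n) := ∫_Ω |i∇ψ + q n ψ|² dx + K₁ ∫_Ω (div n)² dx + K₂ ∫_Ω |curl n + τ n|² dx equals 0 if and only if ψ ≡ 0 on Ω, div n ≡ 0 on Ω and curl n + τ n ≡ 0 on Ω. (This identifies the set of minimizers of the Landau–de Gennes functional in the case κ = 0 as the nematic phases N_τ.) -/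
open MeasureTheory Real Set
open scoped RealInnerProductSpace

noncomputable section

/-! ### Auxiliary lemmas for STATEMENT 4 -/

private lemma norm_sq_sum' (w : E3) : ‖w‖^2 = ∑ i, (w i)^2 := by
  rw [EuclideanSpace.norm_eq, Real.sq_sqrt (by positivity)]
  simp [sq_abs]

private lemma ae_zero_on' (Ω : Set E3) (hopen : IsOpen Ω) {f : E3 → ℝ}
    (hf : ContinuousOn f Ω) (hae : f =ᵐ[volume.restrict Ω] 0) :
    ∀ x ∈ Ω, f x = 0 := by
  intro x hx
  by_contra hfx
  have hc : ContinuousAt f x := hf.continuousAt (hopen.mem_nhds hx)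
  have h1 : f ⁻¹' {(0:ℝ)}ᶜ ∈ nhds x := hc.preimage_mem_nhds (isOpen_compl_singleton.mem_nhds hfx)
  have h2 : f ⁻¹' {(0:ℝ)}ᶜ ∩ Ω ∈ nhds x := Filter.inter_mem h1 (hopen.mem_nhds hx)
  obtain ⟨U, hU1, hU2, hU3⟩ := mem_nhds_iff.mp h2
  have hmeas : (volume.restrict Ω) {y | ¬ f y = 0} = 0 := by
    have := hae
    rw [Filter.EventuallyEq, MeasureTheory.ae_iff] at this
    simpa using this
  rw [Measure.restrict_apply' hopen.measurableSet] at hmeas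
  have hsub : U ⊆ {y | ¬ f y = 0} ∩ Ω := fun y hy => ⟨(hU1 hy).1, (hU1 hy).2⟩
  have : volume U = 0 := measure_mono_null hsub hmeas
  exact (hU2.measure_pos volume ⟨x, hU3⟩).ne' this

private lemma pd_eq' {u : E3 → E3} {x : E3} (hu : DifferentiableAt ℝ u x) (k i : Fin 3) :
    pd (fun y => u y k) i x = fderiv ℝ u x (EuclideanSpace.single i 1) k := by
  have h : HasFDerivAt (fun y => u y k) ((EuclideanSpace.proj k).comp (fderiv ℝ u x)) x :=
    (EuclideanSpace.proj (𝕜 := ℝ) k).hasFDerivAt.comp x hu.hasFDerivAt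
  rw [pd, h.fderiv]; rfl

private lemma contOn_pd' {Ω : Set E3} (hopen : IsOpen Ω) {u : E3 → E3} (hu : ContDiffOn ℝ 1 u Ω)
    (k i : Fin 3) : ContinuousOn (fun x => pd (fun y => u y k) i x) Ω := by
  have h1 : ContinuousOn (fun x => (fderiv ℝ u x (EuclideanSpace.single i 1)) k) Ω :=
    (EuclideanSpace.proj (𝕜 := ℝ) k).continuous.comp_continuousOn
      ((hu.continuousOn_fderiv_of_isOpen hopen le_rfl).clm_apply continuousOn_const)
  exact h1.congr fun x hx =>
    pd_eq' ((hu.differentiableOn one_ne_zero).differentiableAt (hopen.mem_nhds hx)) k i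

private lemma psi_vanish' {Ω : Set E3} (hopen : IsOpen Ω) {q τ : ℝ} (hq : q ≠ 0) (hτ : τ ≠ 0)
    {ψ : E3 → ℂ} {n : E3 → E3}
    (hψ : ContDiffOn ℝ 1 ψ Ω) (hn : ContDiffOn ℝ 1 n Ω)
    (hder : ∀ y ∈ Ω, ∀ j : Fin 3,
      fderiv ℝ ψ y (EuclideanSpace.single j 1) = Complex.I * (q:ℂ) * ψ y * ((n y j : ℝ) : ℂ))
    {x : E3} (hx : x ∈ Ω) (hxn : ‖n x‖ = 1)
    (hcurl : vcurl n x + τ • n x = 0) : ψ x = 0 := by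
  by_contra hpsi
  have hψd : ∀ y ∈ Ω, DifferentiableAt ℝ ψ y := fun y hy =>
    (hψ.differentiableOn one_ne_zero).differentiableAt (hopen.mem_nhds hy)
  have hnd : ∀ y ∈ Ω, DifferentiableAt ℝ n y := fun y hy =>
    (hn.differentiableOn one_ne_zero).differentiableAt (hopen.mem_nhds hy)
  set Pk : Fin 3 → (E3 →L[ℝ] ℂ) :=
    fun k => (EuclideanSpace.proj (𝕜 := ℝ) k).smulRight (1:ℂ) with hPk
  set f' : E3 → (E3 →L[ℝ] ℂ) :=
    fun y => ∑ k, (Complex.I * (q:ℂ) * ψ y * ((n y k : ℝ):ℂ)) • Pk k with hf'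
  have hproj : ∀ (k : Fin 3) (v : E3), (EuclideanSpace.proj (𝕜 := ℝ) k) v = v k := fun k v => rfl
  have hf'apply : ∀ y (j : Fin 3),
      f' y (EuclideanSpace.single j 1) = Complex.I * (q:ℂ) * ψ y * ((n y j : ℝ):ℂ) := by
    intro y j
    simp only [hf', hPk, ContinuousLinearMap.sum_apply, ContinuousLinearMap.smul_apply,
      ContinuousLinearMap.smulRight_apply, hproj, EuclideanSpace.single_apply, smul_eq_mul]
    rw [Finset.sum_eq_single j]
    · simp
    · intro b _ hb; simp [hb]
    · simp
  have hf'deriv : ∀ y ∈ Ω, HasFDerivAt ψ (f' y) y := by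
    intro y hy
    have hd := hψd y hy
    have heq : fderiv ℝ ψ y = f' y := by
      refine ContinuousLinearMap.coe_injective
        ((EuclideanSpace.basisFun (Fin 3) ℝ).toBasis.ext fun j => ?_)
      have hb : ((EuclideanSpace.basisFun (Fin 3) ℝ).toBasis : _) j = EuclideanSpace.single j 1 := by
        simp [OrthonormalBasis.coe_toBasis, EuclideanSpace.basisFun_apply]
      rw [hb]
      rw [show ((fderiv ℝ ψ y : E3 →L[ℝ] ℂ) : E3 →ₗ[ℝ] ℂ) (EuclideanSpace.single j 1)
          = fderiv ℝ ψ y (EuclideanSpace.single j 1) from rfl]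
      rw [hder y hy j]
      exact (hf'apply y j).symm
    exact heq ▸ hd.hasFDerivAt
  have hnk : ∀ k : Fin 3, DifferentiableAt ℝ (fun y => n y k) x :=
    fun k => differentiableAt_euclidean.mp (hnd x hx) k
  have hf'diff : DifferentiableAt ℝ f' x := by
    apply DifferentiableAt.fun_sum; intro k _
    apply DifferentiableAt.smul_const
    exact ((differentiableAt_const _).mul (hψd x hx)).mul
      (Complex.ofRealCLM.differentiableAt.comp x (hnk k))
  set f'' := fderiv ℝ f' x with hf''
  have hB : HasFDerivAt f' f'' x := hf'diff.hasFDerivAt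
  have hsymm := second_derivative_symmetric_of_eventually
    (Filter.eventually_of_mem (hopen.mem_nhds hx) hf'deriv) hB
  have key : ∀ j k : Fin 3,
      f'' (EuclideanSpace.single j 1) (EuclideanSpace.single k 1)
        = Complex.I * q * ψ x * ((pd (fun y => n y k) j x : ℝ):ℂ)
          + ((n x k :ℝ):ℂ) * (Complex.I * q * (Complex.I * q * ψ x * ((n x j:ℝ):ℂ))) := by
    intro j k
    set Dnk := fderiv ℝ (fun y => n y k) x with hDnk
    have hDn : HasFDerivAt (fun y => n y k) Dnk x := (hnk k).hasFDerivAt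
    have hu : HasFDerivAt (fun y => Complex.I * (q:ℂ) * ψ y) ((Complex.I * (q:ℂ)) • f' x) x :=
      (hf'deriv x hx).const_mul _
    have hv : HasFDerivAt (fun y => ((n y k : ℝ):ℂ)) (Complex.ofRealCLM.comp Dnk) x :=
      Complex.ofRealCLM.hasFDerivAt.comp x hDn
    have hmul := hu.mul hv
    have hfun : (fun y => f' y (EuclideanSpace.single k 1))
        = fun y => (Complex.I * (q:ℂ) * ψ y) * ((n y k : ℝ):ℂ) :=
      funext fun y => hf'apply y k
    have hGk : HasFDerivAt (fun y => f' y (EuclideanSpace.single k 1))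
        ((Complex.I * (q:ℂ) * ψ x) • (Complex.ofRealCLM.comp Dnk)
          + ((n x k : ℝ):ℂ) • ((Complex.I * (q:ℂ)) • f' x)) x := by
      rw [hfun]; exact hmul
    have hGk'' := (ContinuousLinearMap.apply ℝ ℂ (EuclideanSpace.single k 1)).hasFDerivAt.comp x hB
    have hGk' : HasFDerivAt (fun y => f' y (EuclideanSpace.single k 1))
        ((ContinuousLinearMap.apply ℝ ℂ (EuclideanSpace.single k 1)).comp f'') x := hGk''
    have hun := hGk'.unique hGk
    have := congrArg (fun (T : E3 →L[ℝ] ℂ) => T (EuclideanSpace.single j 1)) hun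
    simp only [ContinuousLinearMap.comp_apply, ContinuousLinearMap.apply_apply,
      ContinuousLinearMap.add_apply, ContinuousLinearMap.smul_apply, smul_eq_mul] at this
    rw [this, hf'apply x j]
    rw [show pd (fun y => n y k) j x = Dnk (EuclideanSpace.single j 1) from rfl]
    simp only [Complex.ofRealCLM_apply]
  have hppd : ∀ j k : Fin 3, pd (fun y => n y k) j x = pd (fun y => n y j) k x := by
    intro j k
    have h1 := key j k
    have h2 := key k j
    rw [hsymm (EuclideanSpace.single j 1) (EuclideanSpace.single k 1)] at h1
    have h3 : (Complex.I * q * ψ x) *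
        (((pd (fun y => n y k) j x : ℝ):ℂ) - ((pd (fun y => n y j) k x : ℝ):ℂ)) = 0 := by
      linear_combination h2 - h1
    have hZ : (Complex.I * (q:ℂ) * ψ x) ≠ 0 := by
      simp [Complex.I_ne_zero, hq, hpsi]
    have h4 := (mul_eq_zero.mp h3).resolve_left hZ
    have h5 := sub_eq_zero.mp h4
    exact_mod_cast h5
  have hcurl0 : vcurl n x = 0 := by
    ext i
    fin_cases i <;>
      simp [vcurl, ofV, sub_eq_zero] <;> exact (hppd _ _)
  rw [hcurl0, zero_add] at hcurl
  rcases smul_eq_zero.mp hcurl with h | h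
  · exact hτ h
  · rw [h] at hxn; simp at hxn

/-- for `κ = 0`, the Landau–de Gennes energy
`F₀(ψ,n) = ∫|i∇ψ+qnψ|² + K₁∫(div n)² + K₂∫|curl n+τn|²` vanishes iff `ψ ≡ 0`,
`div n ≡ 0` and `curl n + τn ≡ 0` on `Ω`. -/
theorem kappa_zero_minimizers (Ω : Set E3) (hne : Ω.Nonempty) (hconn : IsConnected Ω)
    (hopen : IsOpen Ω) (hbdd : Bornology.IsBounded Ω)
    (q τ K₁ K₂ : ℝ) (hq : 0 < q) (hτ : 0 < τ) (hK₁ : 0 < K₁) (hK₂ : 0 < K₂)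
    (ψ : E3 → ℂ) (hψ : ContDiffOn ℝ 1 ψ Ω)
    (n : E3 → E3) (hn : ContDiffOn ℝ 1 n Ω) (hunit : ∀ x ∈ Ω, ‖n x‖ = 1)
    (h1 : IntegrableOn (magSq (fun y => q • n y) ψ) Ω)
    (h2 : IntegrableOn (fun x => (vdiv n x) ^ 2) Ω)
    (h3 : IntegrableOn (fun x => ‖vcurl n x + τ • n x‖ ^ 2) Ω) :
    (∫ x in Ω, magSq (fun y => q • n y) ψ x) + K₁ * (∫ x in Ω, (vdiv n x) ^ 2)
        + K₂ * (∫ x in Ω, ‖vcurl n x + τ • n x‖ ^ 2) = 0 ↔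
      (∀ x ∈ Ω, ψ x = 0) ∧ (∀ x ∈ Ω, vdiv n x = 0) ∧
        (∀ x ∈ Ω, vcurl n x + τ • n x = 0) := by
  have hΩm := hopen.measurableSet
  constructor
  · intro htot
    have hA0 : 0 ≤ ∫ x in Ω, magSq (fun y => q • n y) ψ x :=
      setIntegral_nonneg hΩm fun x _ => Finset.sum_nonneg fun j _ => sq_nonneg _
    have hB0 : 0 ≤ ∫ x in Ω, (vdiv n x)^2 := setIntegral_nonneg hΩm fun x _ => sq_nonneg _
    have hC0 : 0 ≤ ∫ x in Ω, ‖vcurl n x + τ • n x‖^2 :=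
      setIntegral_nonneg hΩm fun x _ => sq_nonneg _
    have hKB : 0 ≤ K₁ * ∫ x in Ω, (vdiv n x)^2 := mul_nonneg hK₁.le hB0
    have hKC : 0 ≤ K₂ * ∫ x in Ω, ‖vcurl n x + τ • n x‖^2 := mul_nonneg hK₂.le hC0
    have hA : ∫ x in Ω, magSq (fun y => q • n y) ψ x = 0 := by linarith
    have hBK : K₁ * ∫ x in Ω, (vdiv n x)^2 = 0 := by linarith
    have hCK : K₂ * ∫ x in Ω, ‖vcurl n x + τ • n x‖^2 = 0 := by linarith
    have hB : ∫ x in Ω, (vdiv n x)^2 = 0 := (mul_eq_zero.mp hBK).resolve_left hK₁.ne'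
    have hC : ∫ x in Ω, ‖vcurl n x + τ • n x‖^2 = 0 := (mul_eq_zero.mp hCK).resolve_left hK₂.ne'
    have haeA : (magSq (fun y => q • n y) ψ) =ᵐ[volume.restrict Ω] 0 :=
      (integral_eq_zero_iff_of_nonneg
        (fun x => Finset.sum_nonneg fun j _ => sq_nonneg _) h1).mp hA
    have haeB : (fun x => (vdiv n x)^2) =ᵐ[volume.restrict Ω] 0 :=
      (integral_eq_zero_iff_of_nonneg (fun x => sq_nonneg _) h2).mp hB
    have haeC : (fun x => ‖vcurl n x + τ • n x‖^2) =ᵐ[volume.restrict Ω] 0 :=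
      (integral_eq_zero_iff_of_nonneg (fun x => sq_nonneg _) h3).mp hC
    have hψfc : ContinuousOn (fderiv ℝ ψ) Ω := hψ.continuousOn_fderiv_of_isOpen hopen le_rfl
    have hnc : ContinuousOn n Ω := hn.continuousOn
    have hψc : ContinuousOn ψ Ω := hψ.continuousOn
    have hmagc : ContinuousOn (magSq (fun y => q • n y) ψ) Ω := by
      show ContinuousOn (fun x => ∑ j, ‖Complex.I * fderiv ℝ ψ x (EuclideanSpace.single j 1)
        + (((q • n x) j : ℝ) : ℂ) * ψ x‖ ^ 2) Ω
      refine continuousOn_finset_sum _ fun j _ => ContinuousOn.pow (ContinuousOn.norm ?_) 2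
      refine ContinuousOn.add (continuousOn_const.mul (hψfc.clm_apply continuousOn_const)) ?_
      refine ContinuousOn.mul ?_ hψc
      exact Complex.continuous_ofReal.comp_continuousOn
        (continuousOn_const.mul
          ((EuclideanSpace.proj (𝕜 := ℝ) j).continuous.comp_continuousOn hnc))
    have hdivc : ContinuousOn (fun x => (vdiv n x)^2) Ω := by
      refine ContinuousOn.pow ?_ 2
      exact continuousOn_finset_sum _ fun i _ => contOn_pd' hopen hn i i
    have hcurlcomp : ∀ i : Fin 3, ContinuousOn (fun x => vcurl n x i) Ω := by
      intro i
      fin_cases i <;> simp only [vcurl, ofV, Matrix.cons_val_zero, Matrix.cons_val_one,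
          Matrix.head_cons, Fin.isValue, Matrix.cons_val_two, Matrix.tail_cons] <;>
        exact (contOn_pd' hopen hn _ _).sub (contOn_pd' hopen hn _ _)
    have hccc : ContinuousOn (fun x => ‖vcurl n x + τ • n x‖^2) Ω := by
      have h1' : ∀ x : E3, ‖vcurl n x + τ • n x‖^2 = ∑ i, (vcurl n x i + τ * n x i)^2 := by
        intro x; rw [norm_sq_sum']
        exact Finset.sum_congr rfl fun i _ => by simp [PiLp.add_apply, PiLp.smul_apply, smul_eq_mul]
      refine ContinuousOn.congr ?_ (fun x _ => h1' x)
      refine continuousOn_finset_sum _ fun i _ => ContinuousOn.pow ?_ 2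
      exact (hcurlcomp i).add (continuousOn_const.mul
        ((EuclideanSpace.proj (𝕜 := ℝ) i).continuous.comp_continuousOn hnc))
    have hmag0 := ae_zero_on' Ω hopen hmagc haeA
    have hdiv0' := ae_zero_on' Ω hopen hdivc haeB
    have hcur0' := ae_zero_on' Ω hopen hccc haeC
    have hdiv0 : ∀ x ∈ Ω, vdiv n x = 0 := fun x hx =>
      pow_eq_zero_iff two_ne_zero |>.mp (hdiv0' x hx)
    have hcur0 : ∀ x ∈ Ω, vcurl n x + τ • n x = 0 := by
      intro x hx
      have := hcur0' x hx
      rwa [pow_eq_zero_iff two_ne_zero, norm_eq_zero] at this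
    refine ⟨?_, hdiv0, hcur0⟩
    intro x hx
    refine psi_vanish' hopen hq.ne' hτ.ne' hψ hn ?_ hx (hunit x hx) (hcur0 x hx)
    intro y hy j
    have hsum := hmag0 y hy
    have heach := (Finset.sum_eq_zero_iff_of_nonneg
      (fun (j : Fin 3) _ => sq_nonneg
        (‖Complex.I * fderiv ℝ ψ y (EuclideanSpace.single j 1)
          + (((q • n y) j : ℝ) : ℂ) * ψ y‖))).mp hsum j (Finset.mem_univ j)
    have h0 : Complex.I * fderiv ℝ ψ y (EuclideanSpace.single j 1)
        + (((q • n y) j : ℝ) : ℂ) * ψ y = 0 := by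
      rwa [pow_eq_zero_iff two_ne_zero, norm_eq_zero] at heach
    have hsm : ((q • n y) j : ℝ) = q * n y j := rfl
    rw [hsm] at h0
    push_cast at h0
    linear_combination (-Complex.I) * h0 + (fderiv ℝ ψ y (EuclideanSpace.single j 1)) * Complex.I_sq
  · rintro ⟨hψ0, hdiv0, hcur0⟩
    have e1 : ∫ x in Ω, magSq (fun y => q • n y) ψ x = 0 := by
      rw [setIntegral_congr_fun hΩm (g := fun _ => (0:ℝ)) ?_, integral_zero]
      intro x hx
      have hps : ψ x = 0 := hψ0 x hx
      have hfd : fderiv ℝ ψ x = fderiv ℝ (fun _ => (0:ℂ)) x := by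
        exact Filter.EventuallyEq.fderiv_eq
          (Filter.eventuallyEq_of_mem (hopen.mem_nhds hx) hψ0)
      simp [magSq, hfd, hps]
    have e2 : ∫ x in Ω, (vdiv n x)^2 = 0 := by
      rw [setIntegral_congr_fun hΩm (g := fun _ => (0:ℝ)) fun x hx => by simp [hdiv0 x hx],
        integral_zero]
    have e3 : ∫ x in Ω, ‖vcurl n x + τ • n x‖^2 = 0 := by
      rw [setIntegral_congr_fun hΩm (g := fun _ => (0:ℝ)) fun x hx => by simp [hcur0 x hx],
        integral_zero]
    rw [e1, e2, e3]
    ring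
end
end

section
/- Let Ω be a nonempty bounded open subset of ℝ³ with Lebesgue measure |Ω|, let q ≥ 0 and κ ≥ 0. Let ψ : Ω → ℂ be continuously differentiable with |ψ(x)| ≤ 1 for all x ∈ Ω, and let n, ñ : Ω → ℝ³ be bounded measurable vector fields. Assume ∫_Ω |i∇ψ + q n ψ|² dx ≤ κ² ∫_Ω |ψ|² dx. Then ∫_Ω |i∇ψ + q n ψ|² dx ≥ ∫_Ω |i∇ψ + q ñ ψ|² dx − 2 q κ |Ω|^{1/2} ‖n − ñ‖_{L²(Ω)} − q² ‖n − ñ‖²_{L²(Ω)}, where ‖n − ñ‖_{L²(Ω)} = (∫_Ω |n − ñ|² dx)^{1/2}. (This is the key comparison step in the energy estimate E^{Dir}(K₁,K₂,q,τ,κ) ≥ g(q,τ,κ) − c₁/√K − c₂/K.) -/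
open MeasureTheory Real Set
open scoped RealInnerProductSpace

noncomputable section

set_option maxHeartbeats 1000000 in
/-- comparison of magnetic energies for two director fields. If `|ψ| ≤ 1`
on `Ω` and `∫|i∇ψ+qnψ|² ≤ κ²∫|ψ|²`, then
`∫|i∇ψ+qnψ|² ≥ ∫|i∇ψ+qn'ψ|² − 2qκ|Ω|^{1/2}‖n−n'‖_{L²} − q²‖n−n'‖²_{L²}`. -/
theorem energy_comparison (Ω : Set E3) (hne : Ω.Nonempty) (hopen : IsOpen Ω)
    (hbdd : Bornology.IsBounded Ω)
    (q κ : ℝ) (hq : 0 ≤ q) (hκ : 0 ≤ κ)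
    (ψ : E3 → ℂ) (hψ : ContDiffOn ℝ 1 ψ Ω) (hψb : ∀ x ∈ Ω, ‖ψ x‖ ≤ 1)
    (n n' : E3 → E3) (hnm : Measurable n) (hn'meas : Measurable n')
    (Mn : ℝ) (hnb : ∀ x ∈ Ω, ‖n x‖ ≤ Mn) (M' : ℝ) (hn'bound : ∀ x ∈ Ω, ‖n' x‖ ≤ M')
    (hmagi : IntegrableOn (magSq (fun y => q • n y) ψ) Ω)
    (hi : ∫ x in Ω, magSq (fun y => q • n y) ψ x ≤ κ ^ 2 * ∫ x in Ω, ‖ψ x‖ ^ 2) :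
    (∫ x in Ω, magSq (fun y => q • n' y) ψ x)
        - 2 * q * κ * Real.sqrt (volume Ω).toReal
            * Real.sqrt (∫ x in Ω, ‖n x - n' x‖ ^ 2)
        - q ^ 2 * (∫ x in Ω, ‖n x - n' x‖ ^ 2)
      ≤ ∫ x in Ω, magSq (fun y => q • n y) ψ x := by
  
  classical
  have hΩm : MeasurableSet Ω := hopen.measurableSet
  have hfin : volume Ω < ⊤ := hbdd.measure_lt_top
  set μ := volume.restrict Ω with hμ
  set A : E3 → ℝ := magSq (fun y => q • n y) ψ with hA_def
  set B : E3 → ℝ := magSq (fun y => q • n' y) ψ with hB_def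
  have hA_nonneg : ∀ x, 0 ≤ A x := by
    intro x; rw [hA_def]; unfold magSq; positivity
  have hB_nonneg : ∀ x, 0 ≤ B x := by
    intro x; rw [hB_def]; unfold magSq; positivity
  set a : E3 → ℝ := fun x => Real.sqrt (A x) with ha_def
  set b : E3 → ℝ := fun x => ‖n x - n' x‖ with hb_def
  have ha2 : ∀ x, a x ^ 2 = A x := fun x => Real.sq_sqrt (hA_nonneg x)
  have ha_nonneg : ∀ x, 0 ≤ a x := fun x => Real.sqrt_nonneg _
  have hb_nonneg : ∀ x, 0 ≤ b x := fun x => norm_nonneg _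
  -- measurability
  have hψaem : AEMeasurable ψ μ := (hψ.continuousOn.aestronglyMeasurable hΩm).aemeasurable
  have hproj : ∀ (j : Fin 3), Measurable fun v : E3 => v j := fun j =>
    (EuclideanSpace.proj j (𝕜 := ℝ)).continuous.measurable
  have hmagmeas : ∀ (m : E3 → E3), Measurable m →
      AEMeasurable (magSq (fun y => q • m y) ψ) μ := by
    intro m hm
    unfold magSq
    refine Finset.aemeasurable_fun_sum _ fun j _ => ?_
    have h1 : AEMeasurable (fun x => Complex.I * fderiv ℝ ψ x (EuclideanSpace.single j 1)
        + (((q • m x) j : ℝ) : ℂ) * ψ x) μ := by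
      refine AEMeasurable.add ?_ ?_
      · exact ((measurable_fderiv_apply_const ℝ ψ _).const_mul Complex.I).aemeasurable
      · refine AEMeasurable.mul ?_ hψaem
        exact (Complex.measurable_ofReal.comp ((hproj j).comp (hm.const_smul q))).aemeasurable
    exact h1.norm.pow_const 2
  have hbm : Measurable b := (hnm.sub hn'meas).norm
  have ham : AEMeasurable a μ :=
    Real.continuous_sqrt.measurable.comp_aemeasurable (hmagmeas n hnm)
  -- pointwise bound
  have hpt : ∀ x ∈ Ω, B x ≤ A x + 2 * q * (a x * b x) + q ^ 2 * b x ^ 2 := by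
    intro x hx
    set u : EuclideanSpace ℂ (Fin 3) := WithLp.toLp 2 fun j =>
      Complex.I * fderiv ℝ ψ x (EuclideanSpace.single j 1) + ((q * n x j : ℝ) : ℂ) * ψ x with hu
    set v : EuclideanSpace ℂ (Fin 3) := WithLp.toLp 2 fun j =>
      ((q * (n' x j - n x j) : ℝ) : ℂ) * ψ x with hv
    have normsq : ∀ w : EuclideanSpace ℂ (Fin 3), ‖w‖ ^ 2 = ∑ j, ‖w j‖ ^ 2 := by
      intro w
      rw [EuclideanSpace.norm_eq, Real.sq_sqrt (Finset.sum_nonneg fun j _ => sq_nonneg _)]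
    have hAx : A x = ‖u‖ ^ 2 := by
      rw [normsq, hA_def]; unfold magSq
      refine Finset.sum_congr rfl fun j _ => ?_
      simp [hu, PiLp.smul_apply, smul_eq_mul]
    have hBx : B x = ‖u + v‖ ^ 2 := by
      rw [normsq, hB_def]; unfold magSq
      refine Finset.sum_congr rfl fun j _ => ?_
      have h2 : (u + v) j = Complex.I * fderiv ℝ ψ x (EuclideanSpace.single j 1)
          + ((q * n' x j : ℝ) : ℂ) * ψ x := by
        simp only [PiLp.add_apply, hu, hv]
        push_cast
        ring
      rw [h2]
      simp [PiLp.smul_apply, smul_eq_mul]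
    have hbx2 : b x ^ 2 = ∑ j, (n' x j - n x j) ^ 2 := by
      rw [hb_def]
      simp only
      rw [EuclideanSpace.norm_eq, Real.sq_sqrt (Finset.sum_nonneg fun j _ => sq_nonneg _)]
      refine Finset.sum_congr rfl fun j _ => ?_
      simp only [PiLp.sub_apply, Real.norm_eq_abs, sq_abs]
      ring
    have hv2 : ‖v‖ ^ 2 ≤ (q * b x) ^ 2 := by
      rw [normsq, mul_pow, hbx2, Finset.mul_sum]
      refine Finset.sum_le_sum fun j _ => ?_
      have hvj : ‖v j‖ ^ 2 = (q * (n' x j - n x j)) ^ 2 * ‖ψ x‖ ^ 2 := by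
        show ‖((q * (n' x j - n x j) : ℝ) : ℂ) * ψ x‖ ^ 2 = _
        rw [norm_mul, Complex.norm_real, Real.norm_eq_abs, mul_pow, sq_abs]
      rw [hvj]
      calc (q * (n' x j - n x j)) ^ 2 * ‖ψ x‖ ^ 2
          ≤ (q * (n' x j - n x j)) ^ 2 * 1 := by
            refine mul_le_mul_of_nonneg_left ?_ (sq_nonneg _)
            nlinarith [hψb x hx, norm_nonneg (ψ x)]
        _ = q ^ 2 * (n' x j - n x j) ^ 2 := by ring
    have hvle : ‖v‖ ≤ q * b x := by
      have h := Real.sqrt_le_sqrt hv2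
      rwa [Real.sqrt_sq (norm_nonneg v),
        Real.sqrt_sq (mul_nonneg hq (hb_nonneg x))] at h
    have hax : a x = ‖u‖ := by
      rw [ha_def]; simp only; rw [hAx, Real.sqrt_sq (norm_nonneg u)]
    have htri : ‖u + v‖ ≤ ‖u‖ + ‖v‖ := norm_add_le u v
    rw [hBx, hAx, hax]
    nlinarith [norm_nonneg u, norm_nonneg v, norm_nonneg (u + v), hb_nonneg x,
      mul_le_mul_of_nonneg_left hvle (norm_nonneg u), hv2,
      mul_self_le_mul_self (norm_nonneg (u + v)) htri]
  -- integrability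
  have hb2i : IntegrableOn (fun x => b x ^ 2) Ω := by
    refine Integrable.mono' (g := fun _ => (Mn + M') ^ 2)
      (integrableOn_const hfin.ne) (hbm.pow_const 2).aestronglyMeasurable ?_
    rw [ae_restrict_iff' hΩm]
    filter_upwards with x hx
    have h1 : b x ≤ Mn + M' :=
      le_trans (norm_sub_le _ _) (add_le_add (hnb x hx) (hn'bound x hx))
    rw [Real.norm_eq_abs, abs_of_nonneg (sq_nonneg _)]
    exact pow_le_pow_left₀ (hb_nonneg x) h1 2
  have hψ2i : IntegrableOn (fun x => ‖ψ x‖ ^ 2) Ω := by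
    refine Integrable.mono' (g := fun _ => (1 : ℝ)) (integrableOn_const hfin.ne)
      (hψaem.norm.pow_const 2).aestronglyMeasurable ?_
    rw [ae_restrict_iff' hΩm]
    filter_upwards with x hx
    rw [Real.norm_eq_abs, abs_of_nonneg (sq_nonneg _)]
    nlinarith [hψb x hx, norm_nonneg (ψ x)]
  have habi : IntegrableOn (fun x => a x * b x) Ω := by
    have hg : IntegrableOn (fun x => (A x + b x ^ 2) / 2) Ω := by
      have h1 : IntegrableOn (fun x => A x + b x ^ 2) Ω := hmagi.add hb2i
      exact h1.div_const 2
    refine hg.mono' (ham.mul hbm.aemeasurable).aestronglyMeasurable ?_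
    filter_upwards with x
    rw [Real.norm_eq_abs, abs_of_nonneg (mul_nonneg (ha_nonneg x) (hb_nonneg x))]
    nlinarith [ha2 x, sq_nonneg (a x - b x)]
  have hgi : IntegrableOn (fun x => A x + 2 * q * (a x * b x) + q ^ 2 * b x ^ 2) Ω :=
    (hmagi.add (habi.const_mul (2 * q))).add (hb2i.const_mul (q ^ 2))
  have hBi : IntegrableOn B Ω := by
    refine Integrable.mono' hgi (hmagmeas n' hn'meas).aestronglyMeasurable ?_
    rw [ae_restrict_iff' hΩm]
    filter_upwards with x hx
    rw [Real.norm_eq_abs, abs_of_nonneg (hB_nonneg x)]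
    exact hpt x hx
  -- integral comparison
  have hint1 : ∫ x in Ω, B x ≤ ∫ x in Ω, (A x + 2 * q * (a x * b x) + q ^ 2 * b x ^ 2) :=
    setIntegral_mono_on hBi hgi hΩm hpt
  have hsplit : ∫ x in Ω, (A x + 2 * q * (a x * b x) + q ^ 2 * b x ^ 2)
      = (∫ x in Ω, A x) + 2 * q * (∫ x in Ω, a x * b x) + q ^ 2 * (∫ x in Ω, b x ^ 2) := by
    have e1 : ∫ x in Ω, (A x + 2 * q * (a x * b x) + q ^ 2 * b x ^ 2)
        = (∫ x in Ω, (A x + 2 * q * (a x * b x))) + ∫ x in Ω, q ^ 2 * b x ^ 2 :=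
      integral_add (hmagi.add (habi.const_mul (2 * q))) (hb2i.const_mul (q ^ 2))
    have e2 : ∫ x in Ω, (A x + 2 * q * (a x * b x))
        = (∫ x in Ω, A x) + ∫ x in Ω, 2 * q * (a x * b x) :=
      integral_add hmagi (habi.const_mul (2 * q))
    rw [e1, e2, integral_const_mul, integral_const_mul]
  -- Cauchy-Schwarz
  have haL2 : MemLp a 2 μ := by
    rw [memLp_two_iff_integrable_sq ham.aestronglyMeasurable]
    have : (fun x => a x ^ 2) = A := funext ha2
    rw [this]; exact hmagi
  have hbL2 : MemLp b 2 μ := by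
    rw [memLp_two_iff_integrable_sq hbm.aestronglyMeasurable.restrict]
    exact hb2i
  have hconj : (2 : ℝ).HolderConjugate 2 := Real.HolderConjugate.two_two
  have hCS := integral_mul_le_Lp_mul_Lq_of_nonneg hconj
    (Filter.Eventually.of_forall ha_nonneg) (Filter.Eventually.of_forall hb_nonneg)
    (by simpa using haL2) (by simpa using hbL2)
  have hrpow : ∀ x : ℝ, x ^ (2 : ℝ) = x ^ 2 := fun x => by
    rw [show (2 : ℝ) = ((2 : ℕ) : ℝ) by norm_num, Real.rpow_natCast]
  simp only [hrpow, ← Real.sqrt_eq_rpow] at hCS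
  have hCS' : ∫ x in Ω, a x * b x
      ≤ Real.sqrt (∫ x in Ω, A x) * Real.sqrt (∫ x in Ω, b x ^ 2) := by
    have : (fun x => a x ^ 2) = A := funext ha2
    rw [← this]
    exact hCS
  -- bound sqrt(∫ A)
  have hψint_le : ∫ x in Ω, ‖ψ x‖ ^ 2 ≤ (volume Ω).toReal := by
    have h := setIntegral_mono_on (g := fun _ => (1 : ℝ)) hψ2i
      (integrableOn_const hfin.ne) hΩm
      (fun x hx => by show ‖ψ x‖ ^ 2 ≤ 1; nlinarith [hψb x hx, norm_nonneg (ψ x)])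
    simpa [Measure.real] using h
  have hAle : ∫ x in Ω, A x ≤ κ ^ 2 * (volume Ω).toReal :=
    le_trans hi (mul_le_mul_of_nonneg_left hψint_le (sq_nonneg κ))
  have hsqrtA : Real.sqrt (∫ x in Ω, A x) ≤ κ * Real.sqrt ((volume Ω).toReal) := by
    have h := Real.sqrt_le_sqrt hAle
    rwa [Real.sqrt_mul (sq_nonneg κ), Real.sqrt_sq hκ] at h
  -- conclude
  have hsb : 0 ≤ Real.sqrt (∫ x in Ω, b x ^ 2) := Real.sqrt_nonneg _
  have hfinal : ∫ x in Ω, a x * b x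
      ≤ κ * Real.sqrt ((volume Ω).toReal) * Real.sqrt (∫ x in Ω, b x ^ 2) :=
    le_trans hCS' (mul_le_mul_of_nonneg_right hsqrtA hsb)
  have h2q : 2 * q * (∫ x in Ω, a x * b x)
      ≤ 2 * q * (κ * Real.sqrt ((volume Ω).toReal) * Real.sqrt (∫ x in Ω, b x ^ 2)) :=
    mul_le_mul_of_nonneg_left hfinal (by positivity)
  have hgoal : ∫ x in Ω, B x
      ≤ (∫ x in Ω, A x) + 2 * q * (κ * Real.sqrt ((volume Ω).toReal)
          * Real.sqrt (∫ x in Ω, b x ^ 2)) + q ^ 2 * (∫ x in Ω, b x ^ 2) := by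
    rw [hsplit] at hint1
    linarith
  show (∫ x in Ω, B x) - 2 * q * κ * Real.sqrt (volume Ω).toReal
      * Real.sqrt (∫ x in Ω, b x ^ 2) - q ^ 2 * (∫ x in Ω, b x ^ 2) ≤ ∫ x in Ω, A x
  linarith [hgoal]
end
end

section
/- Let Ω be a nonempty bounded open subset of ℝ³, let q, τ, κ, K₁, K₂ ≥ 0, let ψ : Ω → ℂ and n : Ω → ℝ³ be continuously differentiable with |n(x)| = 1 for all x, all five integrals in F being finite. If the real function t ↦ F((1+t)ψ, n) attains a local minimum at t = 0, then ∫_Ω |i∇ψ + q n ψ|² dx = κ² (∫_Ω |ψ|² dx − ∫_Ω |ψ|⁴ dx). (This is the Euler–Lagrange identity satisfied by every minimizer of the Landau–de Gennes functional with Dirichlet condition on the director field.) -/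
open MeasureTheory Real Set
open scoped RealInnerProductSpace

noncomputable section

lemma fderiv_const_mul' (c : ℂ) (hc : c ≠ 0) (f : E3 → ℂ) (x : E3) :
    fderiv ℝ (fun y => c * f y) x = c • fderiv ℝ f x := by
  by_cases h : DifferentiableAt ℝ f x
  · exact fderiv_const_mul h c
  · have h2 : ¬ DifferentiableAt ℝ (fun y => c * f y) x := by
      intro hd
      have := hd.const_mul c⁻¹
      simp only [← mul_assoc, inv_mul_cancel₀ hc, one_mul] at this
      exact h this
    rw [fderiv_zero_of_not_differentiableAt h, fderiv_zero_of_not_differentiableAt h2]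
    ext v; simp

lemma magSq_real_smul (A : E3 → E3) (ψ : E3 → ℂ) (s : ℝ) (hs : s ≠ 0) (x : E3) :
    magSq A (fun y => (s : ℂ) * ψ y) x = s ^ 2 * magSq A ψ x := by
  unfold magSq
  rw [fderiv_const_mul' (s : ℂ) (by exact_mod_cast hs) ψ x, Finset.mul_sum]
  refine Finset.sum_congr rfl fun j _ => ?_
  have h : Complex.I * ((s : ℂ) • fderiv ℝ ψ x) (EuclideanSpace.single j 1)
        + (A x j : ℂ) * ((s : ℂ) * ψ x)
      = (s : ℂ) * (Complex.I * fderiv ℝ ψ x (EuclideanSpace.single j 1)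
        + (A x j : ℂ) * ψ x) := by
    simp only [ContinuousLinearMap.smul_apply, smul_eq_mul]; ring
  rw [h, norm_mul, Complex.norm_real, Real.norm_eq_abs, mul_pow, sq_abs]

lemma norm_real_mul_sq (s : ℝ) (z : ℂ) : ‖(s : ℂ) * z‖ ^ 2 = s ^ 2 * ‖z‖ ^ 2 := by
  rw [norm_mul, Complex.norm_real, Real.norm_eq_abs, mul_pow, sq_abs]

lemma norm_real_mul_four (s : ℝ) (z : ℂ) : ‖(s : ℂ) * z‖ ^ 4 = s ^ 4 * ‖z‖ ^ 4 := by
  rw [norm_mul, Complex.norm_real, Real.norm_eq_abs, mul_pow,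
    show (4 : ℕ) = 2 * 2 from rfl, pow_mul, sq_abs, ← pow_mul]

/-- Euler–Lagrange identity. If `t ↦ F((1+t)ψ, n)` has a local minimum at
`t = 0`, then `∫|i∇ψ+qnψ|² = κ²(∫|ψ|² − ∫|ψ|⁴)`. -/
theorem euler_lagrange_identity (Ω : Set E3) (hne : Ω.Nonempty) (hopen : IsOpen Ω)
    (hbdd : Bornology.IsBounded Ω)
    (q τ κ K₁ K₂ : ℝ) (hq : 0 ≤ q) (hτ : 0 ≤ τ) (hκ : 0 ≤ κ) (hK₁ : 0 ≤ K₁) (hK₂ : 0 ≤ K₂)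
    (ψ : E3 → ℂ) (hψ : ContDiffOn ℝ 1 ψ Ω)
    (n : E3 → E3) (hn : ContDiffOn ℝ 1 n Ω) (hunit : ∀ x ∈ Ω, ‖n x‖ = 1)
    (h1 : IntegrableOn (magSq (fun y => q • n y) ψ) Ω)
    (h2 : IntegrableOn (fun x => ‖ψ x‖ ^ 2) Ω)
    (h3 : IntegrableOn (fun x => ‖ψ x‖ ^ 4) Ω)
    (h4 : IntegrableOn (fun x => (vdiv n x) ^ 2) Ω)
    (h5 : IntegrableOn (fun x => ‖vcurl n x + τ • n x‖ ^ 2) Ω)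
    (hmin : IsLocalMin
      (fun t : ℝ => LdG Ω q τ κ K₁ K₂ (fun x => ((1 + t : ℝ) : ℂ) * ψ x) n) 0) :
    ∫ x in Ω, magSq (fun y => q • n y) ψ x
      = κ ^ 2 * ((∫ x in Ω, ‖ψ x‖ ^ 2) - ∫ x in Ω, ‖ψ x‖ ^ 4) := by
  set a := ∫ x in Ω, magSq (fun y => q • n y) ψ x with ha
  set b := ∫ x in Ω, ‖ψ x‖ ^ 2 with hb
  set c := ∫ x in Ω, ‖ψ x‖ ^ 4 with hc
  set d := K₁ * (∫ x in Ω, (vdiv n x) ^ 2)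
      + K₂ * (∫ x in Ω, ‖vcurl n x + τ • n x‖ ^ 2) with hd
  set P : ℝ → ℝ := fun t =>
      (1 + t) ^ 2 * a - κ ^ 2 * ((1 + t) ^ 2 * b) + κ ^ 2 / 2 * ((1 + t) ^ 4 * c) + d with hP
  have hstep : ∀ t : ℝ, (1 : ℝ) + t ≠ 0 →
      LdG Ω q τ κ K₁ K₂ (fun x => ((1 + t : ℝ) : ℂ) * ψ x) n = P t := by
    intro t ht
    have hA : (∫ x in Ω, magSq (fun y => q • n y) (fun x => ((1 + t : ℝ) : ℂ) * ψ x) x)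
        = (1 + t) ^ 2 * a := by
      rw [ha, ← MeasureTheory.integral_const_mul]
      exact MeasureTheory.integral_congr_ae (Filter.Eventually.of_forall fun x =>
        magSq_real_smul _ ψ (1 + t) ht x)
    have hB : (∫ x in Ω, ‖((1 + t : ℝ) : ℂ) * ψ x‖ ^ 2) = (1 + t) ^ 2 * b := by
      rw [hb, ← MeasureTheory.integral_const_mul]
      exact MeasureTheory.integral_congr_ae (Filter.Eventually.of_forall fun x =>
        norm_real_mul_sq (1 + t) (ψ x))
    have hC : (∫ x in Ω, ‖((1 + t : ℝ) : ℂ) * ψ x‖ ^ 4) = (1 + t) ^ 4 * c := by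
      rw [hc, ← MeasureTheory.integral_const_mul]
      exact MeasureTheory.integral_congr_ae (Filter.Eventually.of_forall fun x =>
        norm_real_mul_four (1 + t) (ψ x))
    rw [hP]
    unfold LdG
    rw [hA, hB, hC, hd]
    ring
  have heq : (fun t : ℝ => LdG Ω q τ κ K₁ K₂ (fun x => ((1 + t : ℝ) : ℂ) * ψ x) n)
      =ᶠ[nhds (0 : ℝ)] P := by
    have hmem : Set.Ioo (-1 : ℝ) 1 ∈ nhds (0 : ℝ) := Ioo_mem_nhds (by norm_num) (by norm_num)
    filter_upwards [hmem] with t ht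
    exact hstep t (by linarith [ht.1])
  have h0 : HasDerivAt (fun t : ℝ => 1 + t) 1 0 := (hasDerivAt_id 0).const_add 1
  have hPd : HasDerivAt P
      (((2 : ℕ) * (1 + 0) ^ 1 * 1 * a - κ ^ 2 * ((2 : ℕ) * (1 + 0) ^ 1 * 1 * b))
        + κ ^ 2 / 2 * ((4 : ℕ) * (1 + 0) ^ 3 * 1 * c)) 0 := by
    exact ((((h0.pow 2).mul_const a).sub (((h0.pow 2).mul_const b).const_mul (κ ^ 2))).add
      (((h0.pow 4).mul_const c).const_mul (κ ^ 2 / 2))).add_const d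
  have hgd := hPd.congr_of_eventuallyEq heq
  have hzero := hmin.hasDerivAt_eq_zero hgd
  have h2 : 2 * a - κ ^ 2 * (2 * b) + κ ^ 2 / 2 * (4 * c) = 0 := by
    rw [← hzero]; push_cast; ring
  linarith
end
end

section
/- Let Ω be a nonempty bounded open subset of ℝ³ and τ > 0. Define μ_τ as the infimum, over all nonzero u ∈ C_c^∞(Ω, ℝ³), of Q_τ(u)/∫_Ω |u|² dx, where Q_τ(u) = ∫_Ω (div u)² dx + ∫_Ω |curl u + τ u|² dx. If μ_τ > 0, then for every u ∈ C_c^∞(Ω, ℝ³), ∫_Ω |∇u|² dx ≤ 2 (1 + τ²/μ_τ) Q_τ(u), where |∇u|² = Σ_{i,j} (∂_i u_j)². (Consequently the full H¹-norm of u is controlled by Q_τ(u): ‖u‖²_{H¹} ≤ C(Ω)(1 + τ²/μ_τ) Q_τ(u).) -/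
open MeasureTheory Real Set
open scoped RealInnerProductSpace

noncomputable section

/-! ### Auxiliary lemmas for `H1_control` -/

section H1Aux

lemma normsq_eq' (a : E3) : ‖a‖ ^ 2 = ∑ i, (a i) ^ 2 := by
  rw [EuclideanSpace.norm_eq, Real.sq_sqrt (by positivity)]
  simp [sq_abs]

lemma contDiff_pd' {f : E3 → ℝ} (hf : ContDiff ℝ 2 f) (i : Fin 3) :
    ContDiff ℝ 1 (pd f i) := by
  have h1 : ContDiff ℝ 1 (fderiv ℝ f) := hf.fderiv_right (m := 1) le_rfl
  exact (ContinuousLinearMap.apply ℝ ℝ (EuclideanSpace.single i 1)).contDiff.comp h1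

lemma hcs_pd' {f : E3 → ℝ} (hf : HasCompactSupport f) (i : Fin 3) :
    HasCompactSupport (pd f i) :=
  (hf.fderiv ℝ).comp_left (g := fun L : E3 →L[ℝ] ℝ => L (EuclideanSpace.single i 1)) rfl

lemma int_cc' {f : E3 → ℝ} (hc : Continuous f) (hs : HasCompactSupport f) :
    Integrable f := hc.integrable_of_hasCompactSupport hs

lemma ibp' {f g : E3 → ℝ} (hf : ContDiff ℝ 1 f) (hg : ContDiff ℝ 1 g)
    (hcf : HasCompactSupport f) (i : Fin 3) :
    ∫ x, f x * pd g i x = - ∫ x, pd f i x * g x := by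
  have hpf : Continuous (fun x => fderiv ℝ f x (EuclideanSpace.single i 1)) :=
    (ContinuousLinearMap.apply ℝ ℝ (EuclideanSpace.single i 1)).continuous.comp
      (hf.continuous_fderiv one_ne_zero)
  have hpg : Continuous (fun x => fderiv ℝ g x (EuclideanSpace.single i 1)) :=
    (ContinuousLinearMap.apply ℝ ℝ (EuclideanSpace.single i 1)).continuous.comp
      (hg.continuous_fderiv one_ne_zero)
  exact integral_mul_fderiv_eq_neg_fderiv_mul_of_integrable
    (int_cc' (hpf.mul hg.continuous) ((hcs_pd' hcf i).mul_right))
    (int_cc' (hf.continuous.mul hpg) (hcf.mul_right))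
    (int_cc' (hf.continuous.mul hg.continuous) (hcf.mul_right))
    (fun x _ => hf.differentiable one_ne_zero x) (fun x _ => hg.differentiable one_ne_zero x)

lemma pd_swap' {f : E3 → ℝ} (hf : ContDiff ℝ 2 f) (i j : Fin 3) (x : E3) :
    pd (pd f j) i x = pd (pd f i) j x := by
  have hdf : Differentiable ℝ (fderiv ℝ f) :=
    (hf.fderiv_right (m := 1) le_rfl).differentiable one_ne_zero
  have key : ∀ v w : E3, fderiv ℝ (fun y => fderiv ℝ f y w) x v
      = fderiv ℝ (fderiv ℝ f) x v w := by
    intro v w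
    have h2 : (fun y => fderiv ℝ f y w)
        = (ContinuousLinearMap.apply ℝ ℝ w) ∘ (fderiv ℝ f) := rfl
    rw [h2, fderiv_comp x (ContinuousLinearMap.differentiableAt _) (hdf x)]
    simp
  have hsymm := ((hf.contDiffAt (x := x)).isSymmSndFDerivAt (by norm_num)).eq
    (EuclideanSpace.single i 1) (EuclideanSpace.single j 1)
  show fderiv ℝ (fun y => fderiv ℝ f y (EuclideanSpace.single j 1)) x (EuclideanSpace.single i 1)
    = fderiv ℝ (fun y => fderiv ℝ f y (EuclideanSpace.single i 1)) x (EuclideanSpace.single j 1)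
  rw [key, key, hsymm]

lemma cross' {f g : E3 → ℝ} (hf : ContDiff ℝ 2 f) (hg : ContDiff ℝ 2 g)
    (hcf : HasCompactSupport f) (i j : Fin 3) :
    ∫ x, pd f i x * pd g j x = ∫ x, pd f j x * pd g i x := by
  have h1 : ∫ x, pd f i x * pd g j x = - ∫ x, pd (pd f i) j x * g x :=
    ibp' (contDiff_pd' hf i) (hg.of_le one_le_two) (hcs_pd' hcf i) j
  have h2 : ∫ x, pd f j x * pd g i x = - ∫ x, pd (pd f j) i x * g x :=
    ibp' (contDiff_pd' hf j) (hg.of_le one_le_two) (hcs_pd' hcf j) i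
  rw [h1, h2]
  congr 1
  exact integral_congr_ae (Filter.Eventually.of_forall fun x => by
    show pd (pd f i) j x * g x = pd (pd f j) i x * g x
    rw [← pd_swap' hf i j x])

lemma Qform_nonneg' (Ω : Set E3) (hopen : IsOpen Ω) (τ : ℝ) (u : E3 → E3) :
    0 ≤ Qform Ω τ u :=
  add_nonneg (setIntegral_nonneg hopen.measurableSet fun x _ => sq_nonneg _)
    (setIntegral_nonneg hopen.measurableSet fun x _ => by positivity)

end H1Aux

/-- H¹-control by the quadratic form `Q_τ`. If `μ_τ > 0` then every smooth
compactly supported field `u` in `Ω` satisfies `∫|∇u|² ≤ 2(1 + τ²/μ_τ) Q_τ(u)`. -/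
theorem H1_control (Ω : Set E3) (hne : Ω.Nonempty) (hopen : IsOpen Ω)
    (hbdd : Bornology.IsBounded Ω) (τ : ℝ) (hτ : 0 < τ)
    (hpos : 0 < muT Ω τ) (u : E3 → E3) (hu : u ∈ testFields Ω) :
    ∫ x in Ω, gradSq u x ≤ 2 * (1 + τ ^ 2 / muT Ω τ) * Qform Ω τ u := by
  obtain ⟨hu1, hu2, hu3⟩ := hu
  -- component facts
  have hU2 : ∀ j : Fin 3, ContDiff ℝ 2 (fun y => u y j) := fun j =>
    (EuclideanSpace.proj j : E3 →L[ℝ] ℝ).contDiff.comp (hu1.of_le (by exact WithTop.coe_le_coe.mpr (le_top : (2 : ℕ∞) ≤ ⊤)))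
  have hcsU : ∀ j : Fin 3, HasCompactSupport (fun y => u y j) := fun j =>
    hu2.comp_left (g := fun a : E3 => a j) rfl
  have hCu : ∀ j : Fin 3, Continuous (fun y => u y j) := fun j => (hU2 j).continuous
  have hCp : ∀ i j : Fin 3, Continuous (pd (fun y => u y j) i) :=
    fun i j => (contDiff_pd' (hU2 j) i).continuous
  have hcsp : ∀ i j : Fin 3, HasCompactSupport (pd (fun y => u y j) i) :=
    fun i j => hcs_pd' (hcsU j) i
  -- vanishing off the support
  have hvanu : ∀ x, x ∉ tsupport u → u x = 0 := fun x hx => image_eq_zero_of_notMem_tsupport hx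
  have hvanp : ∀ (i j : Fin 3) (x), x ∉ tsupport u → pd (fun y => u y j) i x = 0 := by
    intro i j x hx
    have hts : tsupport (fun y => u y j) ⊆ tsupport u :=
      closure_mono (fun y hy => by
        simp only [Function.mem_support] at hy ⊢
        exact fun h => hy (by rw [h]; rfl))
    have h0 : fderiv ℝ (fun y => u y j) x = 0 := by
      by_contra h
      exact hx (hts (support_fderiv_subset ℝ h))
    simp [pd, h0]
  -- norm expansions
  have hnc : ∀ x : E3, ‖vcurl u x‖ ^ 2 =
      (pd (fun y => u y 2) 1 x - pd (fun y => u y 1) 2 x) ^ 2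
    + (pd (fun y => u y 0) 2 x - pd (fun y => u y 2) 0 x) ^ 2
    + (pd (fun y => u y 1) 0 x - pd (fun y => u y 0) 1 x) ^ 2 := by
    intro x
    rw [normsq_eq', Fin.sum_univ_three]
    simp [vcurl, ofV]
  have hnct : ∀ x : E3, ‖vcurl u x + τ • u x‖ ^ 2 =
      (pd (fun y => u y 2) 1 x - pd (fun y => u y 1) 2 x + τ * u x 0) ^ 2
    + (pd (fun y => u y 0) 2 x - pd (fun y => u y 2) 0 x + τ * u x 1) ^ 2
    + (pd (fun y => u y 1) 0 x - pd (fun y => u y 0) 1 x + τ * u x 2) ^ 2 := by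
    intro x
    rw [normsq_eq', Fin.sum_univ_three]
    simp [vcurl, ofV]
  -- the remainder term
  set R : E3 → ℝ := fun x =>
    2 * ((pd (fun y => u y 1) 0 x * pd (fun y => u y 0) 1 x
            - pd (fun y => u y 0) 0 x * pd (fun y => u y 1) 1 x)
       + (pd (fun y => u y 2) 0 x * pd (fun y => u y 0) 2 x
            - pd (fun y => u y 0) 0 x * pd (fun y => u y 2) 2 x)
       + (pd (fun y => u y 2) 1 x * pd (fun y => u y 1) 2 x
            - pd (fun y => u y 1) 1 x * pd (fun y => u y 2) 2 x)) with hR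
  have hpt : ∀ x, gradSq u x = (vdiv u x) ^ 2 + ‖vcurl u x‖ ^ 2 + R x := by
    intro x
    rw [hnc x]
    simp only [gradSq, vdiv, Fin.sum_univ_three, hR]
    ring
  -- integrability
  have hIpp : ∀ i j k l : Fin 3,
      Integrable (fun x => pd (fun y => u y j) i x * pd (fun y => u y l) k x) :=
    fun i j k l => int_cc' ((hCp i j).mul (hCp k l)) ((hcsp i j).mul_right)
  have hIdiv : Integrable (fun x => (vdiv u x) ^ 2) := by
    refine int_cc' ?_ (HasCompactSupport.intro hu2 fun x hx => ?_)
    · exact ((continuous_finset_sum Finset.univ fun i _ => hCp i i).pow 2)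
    · simp [vdiv, Fin.sum_univ_three, hvanp 0 0 x hx, hvanp 1 1 x hx, hvanp 2 2 x hx]
  have hIcurl : Integrable (fun x => ‖vcurl u x‖ ^ 2) := by
    rw [show (fun x => ‖vcurl u x‖ ^ 2) = fun x =>
      (pd (fun y => u y 2) 1 x - pd (fun y => u y 1) 2 x) ^ 2
    + (pd (fun y => u y 0) 2 x - pd (fun y => u y 2) 0 x) ^ 2
    + (pd (fun y => u y 1) 0 x - pd (fun y => u y 0) 1 x) ^ 2 from funext hnc]
    refine int_cc' (by fun_prop) (HasCompactSupport.intro hu2 fun x hx => ?_)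
    simp [hvanp 1 2 x hx, hvanp 2 1 x hx, hvanp 2 0 x hx, hvanp 0 2 x hx,
      hvanp 0 1 x hx, hvanp 1 0 x hx]
  have hIcurlt : Integrable (fun x => ‖vcurl u x + τ • u x‖ ^ 2) := by
    rw [show (fun x => ‖vcurl u x + τ • u x‖ ^ 2) = fun x =>
      (pd (fun y => u y 2) 1 x - pd (fun y => u y 1) 2 x + τ * u x 0) ^ 2
    + (pd (fun y => u y 0) 2 x - pd (fun y => u y 2) 0 x + τ * u x 1) ^ 2
    + (pd (fun y => u y 1) 0 x - pd (fun y => u y 0) 1 x + τ * u x 2) ^ 2 from funext hnct]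
    have hc : ∀ j : Fin 3, Continuous (fun x => u x j) := hCu
    refine int_cc' (by fun_prop) (HasCompactSupport.intro hu2 fun x hx => ?_)
    simp [hvanp 1 2 x hx, hvanp 2 1 x hx, hvanp 2 0 x hx, hvanp 0 2 x hx,
      hvanp 0 1 x hx, hvanp 1 0 x hx, hvanu x hx]
  have hIu : Integrable (fun x => ‖u x‖ ^ 2) :=
    int_cc' (hu1.continuous.norm.pow 2)
      (HasCompactSupport.intro hu2 fun x hx => by simp [hvanu x hx])
  have hIR : Integrable R := by
    rw [hR]
    exact ((((hIpp 0 1 1 0).sub (hIpp 0 0 1 1)).add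
      (((hIpp 0 2 2 0).sub (hIpp 0 0 2 2)))).add
      (((hIpp 1 2 2 1).sub (hIpp 1 1 2 2)))).const_mul 2
  -- ∫ R = 0 by integration by parts
  have hR0 : ∫ x, R x = 0 := by
    have e1 : ∫ x, pd (fun y => u y 1) 0 x * pd (fun y => u y 0) 1 x
        = ∫ x, pd (fun y => u y 0) 0 x * pd (fun y => u y 1) 1 x := by
      rw [cross' (hU2 1) (hU2 0) (hcsU 1) 0 1]
      exact integral_congr_ae (Filter.Eventually.of_forall fun x => mul_comm _ _)
    have e2 : ∫ x, pd (fun y => u y 2) 0 x * pd (fun y => u y 0) 2 x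
        = ∫ x, pd (fun y => u y 0) 0 x * pd (fun y => u y 2) 2 x := by
      rw [cross' (hU2 2) (hU2 0) (hcsU 2) 0 2]
      exact integral_congr_ae (Filter.Eventually.of_forall fun x => mul_comm _ _)
    have e3 : ∫ x, pd (fun y => u y 2) 1 x * pd (fun y => u y 1) 2 x
        = ∫ x, pd (fun y => u y 1) 1 x * pd (fun y => u y 2) 2 x := by
      rw [cross' (hU2 2) (hU2 1) (hcsU 2) 1 2]
      exact integral_congr_ae (Filter.Eventually.of_forall fun x => mul_comm _ _)
    have s1 : ∫ x, (pd (fun y => u y 1) 0 x * pd (fun y => u y 0) 1 x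
        - pd (fun y => u y 0) 0 x * pd (fun y => u y 1) 1 x) = 0 := by
      rw [integral_sub (hIpp 0 1 1 0) (hIpp 0 0 1 1), e1, sub_self]
    have s2 : ∫ x, (pd (fun y => u y 2) 0 x * pd (fun y => u y 0) 2 x
        - pd (fun y => u y 0) 0 x * pd (fun y => u y 2) 2 x) = 0 := by
      rw [integral_sub (hIpp 0 2 2 0) (hIpp 0 0 2 2), e2, sub_self]
    have s3 : ∫ x, (pd (fun y => u y 2) 1 x * pd (fun y => u y 1) 2 x
        - pd (fun y => u y 1) 1 x * pd (fun y => u y 2) 2 x) = 0 := by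
      rw [integral_sub (hIpp 1 2 2 1) (hIpp 1 1 2 2), e3, sub_self]
    have i1 : Integrable (fun x => pd (fun y => u y 1) 0 x * pd (fun y => u y 0) 1 x
        - pd (fun y => u y 0) 0 x * pd (fun y => u y 1) 1 x) volume :=
      (hIpp 0 1 1 0).sub (hIpp 0 0 1 1)
    have i2 : Integrable (fun x => pd (fun y => u y 2) 0 x * pd (fun y => u y 0) 2 x
        - pd (fun y => u y 0) 0 x * pd (fun y => u y 2) 2 x) volume :=
      (hIpp 0 2 2 0).sub (hIpp 0 0 2 2)
    have i3 : Integrable (fun x => pd (fun y => u y 2) 1 x * pd (fun y => u y 1) 2 x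
        - pd (fun y => u y 1) 1 x * pd (fun y => u y 2) 2 x) volume :=
      (hIpp 1 2 2 1).sub (hIpp 1 1 2 2)
    have i12 : Integrable (fun x => (pd (fun y => u y 1) 0 x * pd (fun y => u y 0) 1 x
        - pd (fun y => u y 0) 0 x * pd (fun y => u y 1) 1 x)
        + (pd (fun y => u y 2) 0 x * pd (fun y => u y 0) 2 x
        - pd (fun y => u y 0) 0 x * pd (fun y => u y 2) 2 x)) volume := i1.add i2
    have s12 : ∫ x, ((pd (fun y => u y 1) 0 x * pd (fun y => u y 0) 1 x
        - pd (fun y => u y 0) 0 x * pd (fun y => u y 1) 1 x)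
        + (pd (fun y => u y 2) 0 x * pd (fun y => u y 0) 2 x
        - pd (fun y => u y 0) 0 x * pd (fun y => u y 2) 2 x)) = 0 := by
      rw [integral_add i1 i2, s1, s2, add_zero]
    have s123 : ∫ x, ((pd (fun y => u y 1) 0 x * pd (fun y => u y 0) 1 x
        - pd (fun y => u y 0) 0 x * pd (fun y => u y 1) 1 x)
        + (pd (fun y => u y 2) 0 x * pd (fun y => u y 0) 2 x
        - pd (fun y => u y 0) 0 x * pd (fun y => u y 2) 2 x)
        + (pd (fun y => u y 2) 1 x * pd (fun y => u y 1) 2 x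
        - pd (fun y => u y 1) 1 x * pd (fun y => u y 2) 2 x)) = 0 := by
      rw [integral_add i12 i3, s12, s3, add_zero]
    simp only [hR]
    rw [integral_const_mul, s123, mul_zero]
  -- main identity
  have hident : ∫ x, gradSq u x = (∫ x, (vdiv u x) ^ 2) + ∫ x, ‖vcurl u x‖ ^ 2 := by
    have h1 : ∫ x, gradSq u x = ∫ x, ((vdiv u x) ^ 2 + ‖vcurl u x‖ ^ 2 + R x) :=
      integral_congr_ae (Filter.Eventually.of_forall hpt)
    have idc : Integrable (fun x => (vdiv u x) ^ 2 + ‖vcurl u x‖ ^ 2) volume := hIdiv.add hIcurl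
    have h2 : ∫ x, ((vdiv u x) ^ 2 + ‖vcurl u x‖ ^ 2 + R x)
        = (∫ x, ((vdiv u x) ^ 2 + ‖vcurl u x‖ ^ 2)) + ∫ x, R x :=
      integral_add idc hIR
    have h3 : ∫ x, ((vdiv u x) ^ 2 + ‖vcurl u x‖ ^ 2)
        = (∫ x, (vdiv u x) ^ 2) + ∫ x, ‖vcurl u x‖ ^ 2 := integral_add hIdiv hIcurl
    rw [h1, h2, h3, hR0, add_zero]
  -- pointwise bound on the curl
  have hptI : ∀ x, ‖vcurl u x‖ ^ 2 ≤ 2 * ‖vcurl u x + τ • u x‖ ^ 2 + 2 * τ ^ 2 * ‖u x‖ ^ 2 := by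
    intro x
    have h1 : ‖vcurl u x‖ ≤ ‖vcurl u x + τ • u x‖ + ‖τ • u x‖ := by
      have := norm_sub_le (vcurl u x + τ • u x) (τ • u x)
      simpa using this
    have h2 : ‖τ • u x‖ = |τ| * ‖u x‖ := by rw [norm_smul, Real.norm_eq_abs]
    nlinarith [norm_nonneg (vcurl u x), norm_nonneg (vcurl u x + τ • u x), norm_nonneg (u x),
      sq_abs τ, sq_nonneg (‖vcurl u x + τ • u x‖ - |τ| * ‖u x‖), abs_nonneg τ]
  have hmono : ∫ x, ‖vcurl u x‖ ^ 2
      ≤ 2 * (∫ x, ‖vcurl u x + τ • u x‖ ^ 2) + 2 * τ ^ 2 * ∫ x, ‖u x‖ ^ 2 := by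
    have h := integral_mono hIcurl
      (by exact (hIcurlt.const_mul 2).add (hIu.const_mul (2 * τ ^ 2))) hptI
    have ia : Integrable (fun x => 2 * ‖vcurl u x + τ • u x‖ ^ 2) volume := hIcurlt.const_mul 2
    have ib : Integrable (fun x => 2 * τ ^ 2 * ‖u x‖ ^ 2) volume := hIu.const_mul (2 * τ ^ 2)
    have h2 : ∫ x, (2 * ‖vcurl u x + τ • u x‖ ^ 2 + 2 * τ ^ 2 * ‖u x‖ ^ 2)
        = (∫ x, 2 * ‖vcurl u x + τ • u x‖ ^ 2) + ∫ x, 2 * τ ^ 2 * ‖u x‖ ^ 2 :=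
      integral_add ia ib
    rwa [h2, integral_const_mul, integral_const_mul] at h
  -- set-integral conversions
  have hoff : ∀ x ∉ Ω, x ∉ tsupport u := fun x hx h => hx (hu3 h)
  have cgrad : ∫ x in Ω, gradSq u x = ∫ x, gradSq u x := by
    refine setIntegral_eq_integral_of_forall_compl_eq_zero fun x hx => ?_
    simp only [gradSq]
    refine Finset.sum_eq_zero fun i _ => Finset.sum_eq_zero fun j _ => ?_
    rw [hvanp i j x (hoff x hx)]
    exact zero_pow two_ne_zero
  have cdiv : ∫ x in Ω, (vdiv u x) ^ 2 = ∫ x, (vdiv u x) ^ 2 := by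
    refine setIntegral_eq_integral_of_forall_compl_eq_zero fun x hx => ?_
    simp [vdiv, Fin.sum_univ_three, hvanp 0 0 x (hoff x hx), hvanp 1 1 x (hoff x hx),
      hvanp 2 2 x (hoff x hx)]
  have ccurlt : ∫ x in Ω, ‖vcurl u x + τ • u x‖ ^ 2 = ∫ x, ‖vcurl u x + τ • u x‖ ^ 2 := by
    refine setIntegral_eq_integral_of_forall_compl_eq_zero fun x hx => ?_
    rw [hnct x]
    simp [hvanp 1 2 x (hoff x hx), hvanp 2 1 x (hoff x hx), hvanp 2 0 x (hoff x hx),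
      hvanp 0 2 x (hoff x hx), hvanp 0 1 x (hoff x hx), hvanp 1 0 x (hoff x hx),
      hvanu x (hoff x hx)]
  have cu : ∫ x in Ω, ‖u x‖ ^ 2 = ∫ x, ‖u x‖ ^ 2 := by
    refine setIntegral_eq_integral_of_forall_compl_eq_zero fun x hx => ?_
    simp [hvanu x (hoff x hx)]
  -- the spectral bound
  have hT0 : 0 ≤ ∫ x in Ω, ‖u x‖ ^ 2 :=
    setIntegral_nonneg hopen.measurableSet fun x _ => by positivity
  have hQ0 : 0 ≤ Qform Ω τ u := Qform_nonneg' Ω hopen τ u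
  have hmuT : muT Ω τ * (∫ x in Ω, ‖u x‖ ^ 2) ≤ Qform Ω τ u := by
    by_cases h0 : u = 0
    · have hz : (∫ x in Ω, ‖u x‖ ^ 2) = 0 := by rw [h0]; simp
      rw [hz, mul_zero]; exact hQ0
    · have hBdd : BddBelow { r : ℝ | ∃ v ∈ testFields Ω, v ≠ 0 ∧
          r = Qform Ω τ v / ∫ x in Ω, ‖v x‖ ^ 2 } := by
        refine ⟨0, fun r hr => ?_⟩
        obtain ⟨v, hv, hv0, rfl⟩ := hr
        exact div_nonneg (Qform_nonneg' Ω hopen τ v)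
          (setIntegral_nonneg hopen.measurableSet fun x _ => by positivity)
      have hmem : Qform Ω τ u / ∫ x in Ω, ‖u x‖ ^ 2 ∈ { r : ℝ | ∃ v ∈ testFields Ω, v ≠ 0 ∧
          r = Qform Ω τ v / ∫ x in Ω, ‖v x‖ ^ 2 } := ⟨u, ⟨hu1, hu2, hu3⟩, h0, rfl⟩
      have hle : muT Ω τ ≤ Qform Ω τ u / ∫ x in Ω, ‖u x‖ ^ 2 := csInf_le hBdd hmem
      rcases eq_or_lt_of_le hT0 with heq | hlt
      · rw [← heq, mul_zero]; exact hQ0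
      · have h := mul_le_mul_of_nonneg_right hle hT0
        rwa [div_mul_cancel₀ _ hlt.ne'] at h
  -- final arithmetic
  have hQ : Qform Ω τ u = (∫ x, (vdiv u x) ^ 2) + ∫ x, ‖vcurl u x + τ • u x‖ ^ 2 := by
    rw [Qform, cdiv, ccurlt]
  rw [← cu] at hmono
  have hs0 : 0 ≤ τ ^ 2 / muT Ω τ := div_nonneg (sq_nonneg τ) hpos.le
  have hsm : muT Ω τ * (τ ^ 2 / muT Ω τ) = τ ^ 2 := by field_simp
  have h5 : (τ ^ 2 / muT Ω τ) * (muT Ω τ * (∫ x in Ω, ‖u x‖ ^ 2))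
      ≤ (τ ^ 2 / muT Ω τ) * Qform Ω τ u := mul_le_mul_of_nonneg_left hmuT hs0
  have h6 : 2 * τ ^ 2 * (∫ x in Ω, ‖u x‖ ^ 2)
      = 2 * ((τ ^ 2 / muT Ω τ) * (muT Ω τ * (∫ x in Ω, ‖u x‖ ^ 2))) := by
    have hne' : muT Ω τ ≠ 0 := hpos.ne'
    field_simp
  have hDD0 : 0 ≤ ∫ x, (vdiv u x) ^ 2 := integral_nonneg fun x => sq_nonneg _
  rw [cgrad, hident]
  nlinarith [hmono, h6, h5, hQ, hDD0, hQ0]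
end
end
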